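/- arXiv:alg-geom/9611019 — 6 statements merged into one kernel-verified Lean document; each statement's English description precedes it below -/
import Mathlib

section
/- Let w ∈ S_n and 1 ≤ i ≤ n−1 with w(i) > w(i+1), and suppose i is the first ascent of ws_i (the least j with (ws_i)(j) < (ws_i)(j+1)). Then: (a) C_{w(i+1)}(w) = [i] = {1,…,i}; (b) the multiset I′(w), obtained from I(w) by removing one copy of [i], is i-free, i.e., C ∩ {i, i+1} ≠ {i+1} for every C ∈ I′(w); (c) as multisets of subsets of [n], I(ws_i) = s_i I′(w) ∪ {[i−1]}, where s_i I′(w) is the multiset of the image sets s_i(C) for C ∈ I′(w), and the extra member [i−1] is omitted when i = 1 (since [0] = ∅). -/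
open MvPolynomial

noncomputable section

namespace BottSamelson

/-- The initial segment `[j] = {1,…,j}` (1-based), i.e. `{a : Fin n | (a:ℕ) < j}` (0-based). -/
def iseg (n j : ℕ) : Finset (Fin n) := Finset.univ.filter fun a => (a : ℕ) < j

/-- The generic upper-triangular matrix of variables: `X i j = x i j` for `i ≤ j`, else `0`. -/
def Xut (n : ℕ) : Fin n → Fin n → MvPolynomial (Fin n × Fin n) ℂ :=
  fun i j => if i ≤ j then MvPolynomial.X (i, j) else 0

/-- The full generic matrix of variables. -/
def Xfull (n : ℕ) : Fin n → Fin n → MvPolynomial (Fin n × Fin n) ℂ :=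
  fun i j => MvPolynomial.X (i, j)

/-- The minor of `M` on rows `R` and columns `C` (defined to be `0` if `R.card ≠ C.card`). -/
def minorOf {n : ℕ} (M : Fin n → Fin n → MvPolynomial (Fin n × Fin n) ℂ)
    (R C : Finset (Fin n)) : MvPolynomial (Fin n × Fin n) ℂ :=
  if h : R.card = C.card then
    Matrix.det (Matrix.of fun a b : Fin C.card =>
      M (R.orderEmbOfFin h a) (C.orderEmbOfFin rfl b))
  else 0

/-- `R ≤ C` componentwise (including the requirement `|R| = |C|`). -/
def compLE {n : ℕ} (R C : Finset (Fin n)) : Prop :=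
  ∃ h : R.card = C.card, ∀ t : Fin C.card, R.orderEmbOfFin h t ≤ C.orderEmbOfFin rfl t

/-- The flagged Weyl module `M^B_{D,m}`: the span of all products of flagged minors
`∏_k ∏_{t < m k} Δ̃_{D k}^{R k t}` with `R k t ≤ D k` componentwise. -/
def flaggedWeyl {n l : ℕ} (D : Fin l → Finset (Fin n)) (m : Fin l → ℕ) :
    Submodule ℂ (MvPolynomial (Fin n × Fin n) ℂ) :=
  Submodule.span ℂ
    { f | ∃ R : (k : Fin l) → Fin (m k) → Finset (Fin n),
        (∀ k t, compLE (R k t) (D k)) ∧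
        f = ∏ k : Fin l, ∏ t : Fin (m k), minorOf (Xut n) (R k t) (D k) }

/-- The (unflagged) Weyl module `M_{D,m}`: the span of all products of minors of the
full generic matrix with arbitrary row sets of the right cardinality. -/
def weylModule {n l : ℕ} (D : Fin l → Finset (Fin n)) (m : Fin l → ℕ) :
    Submodule ℂ (MvPolynomial (Fin n × Fin n) ℂ) :=
  Submodule.span ℂ
    { f | ∃ R : (k : Fin l) → Fin (m k) → Finset (Fin n),
        (∀ k t, (R k t).card = (D k).card) ∧
        f = ∏ k : Fin l, ∏ t : Fin (m k), minorOf (Xfull n) (R k t) (D k) }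

/-- The row-degree weight: the variable `x i j` has weight the `i`-th standard vector. -/
def rowWeight (n : ℕ) : Fin n × Fin n → (Fin n →₀ ℕ) := fun p => Finsupp.single p.1 1

/-- The dual character of a submodule of the polynomial ring, graded by row degree:
`char* M = Σ_μ dim (M_μ) · x^μ`. -/
def dualChar {n : ℕ} (M : Submodule ℂ (MvPolynomial (Fin n × Fin n) ℂ)) :
    MvPolynomial (Fin n) ℤ :=
  ∑ᶠ μ : Fin n →₀ ℕ,
    MvPolynomial.monomial μ
      ((Module.finrank ℂ
        ↥(M ⊓ MvPolynomial.weightedHomogeneousSubmodule ℂ (rowWeight n) μ) : ℤ))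

/-- The `j`-th column of the Rothe diagram of `w`:
`C_j(w) = {i : i < w⁻¹(j), w(i) > j}`. -/
def rotheCol {n : ℕ} (w : Equiv.Perm (Fin n)) (j : Fin n) : Finset (Fin n) :=
  Finset.univ.filter fun i => i < w.symm j ∧ j < w i

/-- The inversion family `I(w)`: the multiset of the nonempty columns of the Rothe
diagram of `w`, counted with multiplicity. -/
def invFamily {n : ℕ} (w : Equiv.Perm (Fin n)) : Multiset (Finset (Fin n)) :=
  (Finset.univ.val.map fun j => rotheCol w j).filter fun C => C ≠ ∅

/-- The number of inversions (the length) of a permutation. -/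
def invCount {n : ℕ} (w : Equiv.Perm (Fin n)) : ℕ :=
  (Finset.univ.filter fun p : Fin n × Fin n => p.1 < p.2 ∧ w p.2 < w p.1).card

/-- The simple transposition exchanging the (0-based) positions `a` and `a+1`
(the identity if out of range). -/
def sNat (n a : ℕ) : Equiv.Perm (Fin n) :=
  if h : a + 1 < n then Equiv.swap ⟨a, Nat.lt_of_succ_lt h⟩ ⟨a + 1, h⟩ else 1

/-- The product `s_{i_1} ⋯ s_{i_k}` of the first `k` letters of the word `ii`
(letters written 0-based). -/
def wordProd (n : ℕ) {l : ℕ} (ii : Fin l → ℕ) (k : ℕ) : Equiv.Perm (Fin n) :=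
  ((List.ofFn fun t => sNat n (ii t)).take k).prod

/-- The `k`-th chamber set `w_k[i_k]` of the word `ii`. -/
def chamberSet (n : ℕ) {l : ℕ} (ii : Fin l → ℕ) (k : Fin l) : Finset (Fin n) :=
  (iseg n (ii k + 1)).image (wordProd n ii ((k : ℕ) + 1))

/-- The full chamber family `D_i^+ = {[1],…,[n]} ∪ {w_k[i_k]}`. -/
def fullChamberFam (n : ℕ) {l : ℕ} (ii : Fin l → ℕ) : Finset (Finset (Fin n)) :=
  (Finset.univ.image fun j : Fin n => iseg n ((j : ℕ) + 1)) ∪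
    Finset.univ.image (chamberSet n ii)

/-- Two subsets are strongly separated. -/
def stronglySep {n : ℕ} (C C' : Finset (Fin n)) : Prop :=
  (∀ a ∈ C \ C', ∀ b ∈ C' \ C, a < b) ∨ ∀ a ∈ C' \ C, ∀ b ∈ C \ C', a < b

/-- The divided difference operator `∂ f = (f - s f)/(x_i - x_j)`, where `s` swaps the
variables `x_i` and `x_j` (defined as the unique polynomial `g` with
`g·(x_i - x_j) = f - s f`). -/
def divDiff {n : ℕ} (i j : Fin n) (f : MvPolynomial (Fin n) ℤ) : MvPolynomial (Fin n) ℤ :=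
  Classical.epsilon fun g =>
    g * (MvPolynomial.X i - MvPolynomial.X j) = f - MvPolynomial.rename (Equiv.swap i j) f

/-- The isobaric divided difference (Demazure operator)
`Λ f = (x_i f - x_j · s f)/(x_i - x_j)`. -/
def demazure {n : ℕ} (i j : Fin n) (f : MvPolynomial (Fin n) ℤ) : MvPolynomial (Fin n) ℤ :=
  Classical.epsilon fun g =>
    g * (MvPolynomial.X i - MvPolynomial.X j) =
      MvPolynomial.X i * f - MvPolynomial.X j * MvPolynomial.rename (Equiv.swap i j) f

/-- The Demazure operator `Λ_a` for the (0-based) simple reflection `s_a`. -/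
def demazureNat (n a : ℕ) (f : MvPolynomial (Fin n) ℤ) : MvPolynomial (Fin n) ℤ :=
  if h : a + 1 < n then demazure ⟨a, Nat.lt_of_succ_lt h⟩ ⟨a + 1, h⟩ f else f

/-- The divided difference `∂_a` for the (0-based) simple reflection `s_a`. -/
def divDiffNat (n a : ℕ) (f : MvPolynomial (Fin n) ℤ) : MvPolynomial (Fin n) ℤ :=
  if h : a + 1 < n then divDiff ⟨a, Nat.lt_of_succ_lt h⟩ ⟨a + 1, h⟩ f else f

/-- The fundamental weight `ϖ_j = x_1 x_2 ⋯ x_j` (`j` counted 1-based). -/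
def varpi (n j : ℕ) : MvPolynomial (Fin n) ℤ := ∏ t ∈ iseg n j, MvPolynomial.X t

/-- The nested Demazure expression `Λ_{a_1}(ϖ_{a_1}^{m_1}·Λ_{a_2}(⋯ Λ_{a_l}(ϖ_{a_l}^{m_l})⋯))`,
letters written 0-based. -/
def demazureWord (n : ℕ) : List (ℕ × ℕ) → MvPolynomial (Fin n) ℤ
  | [] => 1
  | (a, m) :: rest => demazureNat n a (varpi n (a + 1) ^ m * demazureWord n rest)

/-- The successor in `Fin n` (fixing the top element). -/
def next {n : ℕ} (a : Fin n) : Fin n := if h : (a : ℕ) + 1 < n then ⟨a + 1, h⟩ else a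

/-- The set of ascents of a permutation. -/
def ascents {n : ℕ} (w : Equiv.Perm (Fin n)) : Finset (Fin n) :=
  Finset.univ.filter fun a => w a < w (next a)

/-- The staircase monomial `x_1^{n-1} x_2^{n-2} ⋯ x_{n-1}`. -/
def staircase (n : ℕ) : MvPolynomial (Fin n) ℤ :=
  ∏ i : Fin n, MvPolynomial.X i ^ (n - 1 - (i : ℕ))

/-- Auxiliary recursion for the Schubert polynomial along first ascents. -/
def schubertAux (n : ℕ) : ℕ → Equiv.Perm (Fin n) → MvPolynomial (Fin n) ℤ
  | 0, _ => staircase n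
  | fuel + 1, w =>
    if h : (ascents w).Nonempty then
      divDiff ((ascents w).min' h) (next ((ascents w).min' h))
        (schubertAux n fuel (w * Equiv.swap ((ascents w).min' h) (next ((ascents w).min' h))))
    else staircase n

/-- The Schubert polynomial `𝔖(w)`, defined by
`𝔖(w₀) = x_1^{n-1}⋯x_{n-1}` and `𝔖(w) = ∂_i 𝔖(w s_i)` for `i` the first ascent of `w`. -/
def schubert {n : ℕ} (w : Equiv.Perm (Fin n)) : MvPolynomial (Fin n) ℤ :=
  schubertAux n (n * n) w

/-- The general linear group `GL(n, ℂ)`. -/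
abbrev GLn (n : ℕ) := Matrix.GeneralLinearGroup (Fin n) ℂ

/-- Membership in the Borel subgroup `B` of upper-triangular matrices. -/
def upperTri {n : ℕ} (g : GLn n) : Prop :=
  ∀ i j : Fin n, j < i → (g : Matrix (Fin n) (Fin n) ℂ) i j = 0

/-- The coordinate subspace `E_C = span{e_j : j ∈ C} ⊆ ℂⁿ`. -/
def coordSub {n : ℕ} (C : Finset (Fin n)) : Submodule ℂ (Fin n → ℂ) :=
  Submodule.span ℂ ((fun j => (Pi.single j 1 : Fin n → ℂ)) '' (C : Set (Fin n)))

/-- The image subspace `A·V` of a subspace under a matrix. -/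
def mapSub {n : ℕ} (A : Matrix (Fin n) (Fin n) ℂ) (V : Submodule ℂ (Fin n → ℂ)) :
    Submodule ℂ (Fin n → ℂ) :=
  Submodule.map (Matrix.toLin' A) V

/-- Lexicographic order on subsets: the smallest element of the symmetric difference
belongs to `C`. -/
def lexLT {n : ℕ} (C C' : Finset (Fin n)) : Prop :=
  ∃ a : Fin n, IsLeast (↑(C \ C' ∪ C' \ C) : Set (Fin n)) a ∧ a ∈ C

/-! Since `i` is the first ascent of `v = w s_i`, the values `v(1) > ⋯ > v(i) = w(i+1)` decrease,
so `w(i+1)` is smaller than every `w(j)` with `j ≤ i`; hence `C_{w(i+1)}(w) = [i]` and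
`C_{w(i+1)}(v) = [i-1]`. The transposition `s_i` preserves the order of every pair other than
`{i, i+1}`, so each remaining column of `v` is the `s_i`-image of the same column of `w`. A column
of `w` containing `i+1` but not `i` would need `w(i) ≤ j < w(i+1)`, impossible at a descent. -/

open Equiv Finset

section RotheDiagram

variable {n : ℕ}

theorem next_eq_of_lt {i : Fin n} (h : (i : ℕ) + 1 < n) : next i = ⟨i + 1, h⟩ := dif_pos h

theorem iseg_eq_empty_iff (hn : 0 < n) {j : ℕ} : iseg n j = ∅ ↔ j = 0 := by
  refine ⟨fun h => ?_, fun h => by simp [iseg, h]⟩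
  by_contra hj
  have : (⟨0, hn⟩ : Fin n) ∈ iseg n j := by simp [iseg]; omega
  simp [h] at this

theorem apply_lt_apply_of_lt_of_mem_lowerBounds_ascents {v : Perm (Fin n)} {A : Fin n}
    (hA : A ∈ lowerBounds {j | v j < v (next j)}) {i : Fin n} (hi : i < A) : v A < v i := by
  have hstep : ∀ j < A, v (next j) < v j := fun j hj => by
    have hnext : next j = ⟨j + 1, by omega⟩ := next_eq_of_lt (by omega)
    refine lt_of_le_of_ne (not_lt.mp fun h => (hA h).not_gt hj) fun h => ?_
    have := congrArg Fin.val (v.injective h)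
    simp [hnext] at this
  obtain ⟨k, hk⟩ : ∃ k, (A : ℕ) = i + k + 1 := ⟨A - i - 1, by omega⟩
  induction k generalizing i with
  | zero =>
    have hnext : next i = A := by rw [next_eq_of_lt (by omega)]; ext; simp [hk]
    simpa [hnext] using hstep i hi
  | succ k ih =>
    have hnext : next i = ⟨i + 1, by omega⟩ := next_eq_of_lt (by omega)
    calc v A < v (next i) := ih (by rw [hnext, Fin.lt_def]; simp; omega) (by simp [hnext]; omega)
      _ < v i := hstep i hi

theorem swap_lt_swap_iff_of_adjacent {A B x y : Fin n} (hAB : (B : ℕ) = A + 1)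
    (hxy : ¬ (x = A ∧ y = B)) (hyx : ¬ (x = B ∧ y = A)) :
    swap A B x < swap A B y ↔ x < y := by
  simp only [swap_apply_def, Fin.lt_def, Fin.ext_iff] at *
  split_ifs <;> omega

theorem rotheCol_apply_eq_iseg {w : Perm (Fin n)} {j : Fin n} (hj : ∀ i < j, w j < w i) :
    rotheCol w (w j) = iseg n j := by
  ext i
  simp only [rotheCol, iseg, mem_filter, mem_univ, true_and, symm_apply_apply, ← Fin.lt_def]
  exact ⟨And.left, fun hi => ⟨hi, hj i hi⟩⟩

theorem rotheCol_inter_pair_ne_singleton {w : Perm (Fin n)} {A B : Fin n} (hAB : A < B)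
    (hdes : w B < w A) (k : Fin n) : rotheCol w k ∩ {A, B} ≠ {B} := by
  intro h
  have hB : B ∈ rotheCol w k := (mem_inter.mp (h ▸ mem_singleton_self B)).1
  have hA : A ∉ rotheCol w k := fun hA =>
    hAB.ne (mem_singleton.mp (h ▸ mem_inter.mpr ⟨hA, by simp⟩))
  simp only [rotheCol, mem_filter, mem_univ, true_and, not_and, not_lt] at hA hB
  exact (hA (hAB.trans hB.1)).not_gt (hB.2.trans hdes)

theorem invFamily_inter_pair_ne_singleton {w : Perm (Fin n)} {A B : Fin n} (hAB : A < B)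
    (hdes : w B < w A) : ∀ C ∈ invFamily w, C ∩ {A, B} ≠ {B} := by
  intro C hC
  simp only [invFamily, Multiset.mem_filter, Multiset.mem_map] at hC
  obtain ⟨⟨k, -, rfl⟩, -⟩ := hC
  exact rotheCol_inter_pair_ne_singleton hAB hdes k

theorem rotheCol_mul_swap {w : Perm (Fin n)} {A B : Fin n} (hAB : (B : ℕ) = A + 1)
    (hdes : w B < w A) {k : Fin n} (hk : k ≠ w B) :
    rotheCol (w * swap A B) k = (rotheCol w k).image (swap A B) := by
  ext i
  rw [← Equiv.coe_toEmbedding, ← map_eq_image, mem_map_equiv, symm_swap]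
  simp only [rotheCol, mem_filter, mem_univ, true_and]
  simp only [Perm.mul_def, symm_trans_apply, trans_apply, symm_swap]
  by_cases hiA : i = A ∧ w.symm k = A
  · obtain ⟨rfl, hp⟩ := hiA
    have hk' : k = w i := by rw [← hp, apply_symm_apply]
    simp [hk', hdes.not_gt]
  · rw [← swap_lt_swap_iff_of_adjacent (x := i) hAB, swap_apply_self]
    · rintro ⟨rfl, h⟩
      rw [swap_apply_eq_iff, swap_apply_right] at h
      exact hiA ⟨rfl, h⟩
    · rintro ⟨rfl, h⟩
      rw [swap_apply_eq_iff, swap_apply_left, symm_apply_eq] at h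
      exact hk h

theorem invFamily_eq_add_filter_erase (w : Perm (Fin n)) (j : Fin n) :
    invFamily w = (if rotheCol w j = ∅ then 0 else {rotheCol w j}) +
      ((univ.val.erase j).map (rotheCol w)).filter (· ≠ ∅) := by
  rw [invFamily]
  conv_lhs => rw [← Multiset.cons_erase (mem_univ_val j), Multiset.map_cons, Multiset.filter_cons]
  rw [ite_not]

theorem filter_map_rotheCol_mul_swap {w : Perm (Fin n)} {A B : Fin n} (hAB : (B : ℕ) = A + 1)
    (hdes : w B < w A) :
    ((univ.val.erase (w B)).map (rotheCol (w * swap A B))).filter (· ≠ ∅) =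
      (((univ.val.erase (w B)).map (rotheCol w)).filter (· ≠ ∅)).map (image (swap A B)) := by
  have hcols : (univ.val.erase (w B)).map (rotheCol (w * swap A B)) =
      ((univ.val.erase (w B)).map (rotheCol w)).map (image (swap A B)) := by
    rw [Multiset.map_map]
    exact Multiset.map_congr rfl fun k hk =>
      rotheCol_mul_swap hAB hdes (univ.nodup.mem_erase_iff.mp hk).1
  rw [hcols, Multiset.filter_map]
  exact congrArg _ (Multiset.filter_congr fun C _ => by simp [image_eq_empty])

end RotheDiagram

/-- Let `w ∈ S_n`, `w(i) > w(i+1)`, and let `i` be the first ascent of `w s_i`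
(`a` is the 0-based index, `i = a+1` 1-based).  Then:
(a) `C_{w(i+1)}(w) = [i]`;
(b) removing one copy of `[i]` from `I(w)` leaves an `i`-free multiset;
(c) `I(w s_i) = s_i I′(w) ∪ {[i-1]}` (the last member omitted when `i = 1`). -/
theorem invFamily_first_ascent_recursion
    (n a : ℕ) (ha : a + 1 < n) (w : Equiv.Perm (Fin n))
    (hdes : w ⟨a + 1, ha⟩ < w ⟨a, Nat.lt_of_succ_lt ha⟩)
    (hfirst : IsLeast {j : Fin n |
        (w * Equiv.swap (⟨a, Nat.lt_of_succ_lt ha⟩ : Fin n) (⟨a + 1, ha⟩ : Fin n)) j <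
          (w * Equiv.swap (⟨a, Nat.lt_of_succ_lt ha⟩ : Fin n) (⟨a + 1, ha⟩ : Fin n)) (next j)}
      ⟨a, Nat.lt_of_succ_lt ha⟩) :
    rotheCol w (w ⟨a + 1, ha⟩) = iseg n (a + 1)
    ∧ (∀ C ∈ (invFamily w).erase (iseg n (a + 1)),
        C ∩ ({⟨a, Nat.lt_of_succ_lt ha⟩, ⟨a + 1, ha⟩} : Finset (Fin n))
          ≠ ({⟨a + 1, ha⟩} : Finset (Fin n)))
    ∧ invFamily (w * Equiv.swap (⟨a, Nat.lt_of_succ_lt ha⟩ : Fin n) (⟨a + 1, ha⟩ : Fin n))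
        = Multiset.map
            (Finset.image (⇑(Equiv.swap (⟨a, Nat.lt_of_succ_lt ha⟩ : Fin n) (⟨a + 1, ha⟩ : Fin n))))
            ((invFamily w).erase (iseg n (a + 1)))
          + (if a = 0 then (0 : Multiset (Finset (Fin n))) else {iseg n a}) := by
  set A : Fin n := ⟨a, Nat.lt_of_succ_lt ha⟩
  set B : Fin n := ⟨a + 1, ha⟩
  have hAB : (B : ℕ) = A + 1 := rfl
  have hbelowA : ∀ i < A, (w * swap A B) A < (w * swap A B) i := fun i hi =>
    apply_lt_apply_of_lt_of_mem_lowerBounds_ascents hfirst.2 hi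
  have hbelowB : ∀ i < B, w B < w i := fun i hi => by
    obtain hi | rfl : i < A ∨ i = A := by rw [Fin.lt_def] at hi ⊢; rw [Fin.ext_iff]; omega
    · have hiB : i ≠ B := (hi.trans (by rw [Fin.lt_def]; omega)).ne
      simpa [swap_apply_of_ne_of_ne hi.ne hiB] using hbelowA i hi
    · exact hdes
  have colB : rotheCol w (w B) = iseg n (a + 1) := rotheCol_apply_eq_iseg hbelowB
  have colA : rotheCol (w * swap A B) (w B) = iseg n a := by
    simpa using rotheCol_apply_eq_iseg hbelowA
  have hn : 0 < n := Nat.zero_lt_of_lt ha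
  have hne : iseg n (a + 1) ≠ ∅ := by rw [ne_eq, iseg_eq_empty_iff hn]; omega
  refine ⟨colB, fun C hC => ?_, ?_⟩
  · exact invFamily_inter_pair_ne_singleton (by rw [Fin.lt_def, hAB]; omega) hdes C
      (Multiset.mem_of_mem_erase hC)
  · rw [invFamily_eq_add_filter_erase w (w B), invFamily_eq_add_filter_erase _ (w B), colB, colA,
      if_neg hne, Multiset.singleton_add, Multiset.erase_cons_head,
      filter_map_rotheCol_mul_swap hAB hdes, add_comm]
    simp only [iseg_eq_empty_iff hn]

end BottSamelson
end
end

section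
/- (Leclerc–Zelevinsky characterization) A family D of nonempty subsets of [n] is strongly separated if and only if there exists a reduced word i = (i_1,…,i_N) with s_{i_1}⋯s_{i_N} = w_0 (the longest permutation of S_n, N = n(n−1)/2) such that D ⊆ D_i^+. -/
open MvPolynomial

noncomputable section

namespace BottSamelson

namespace LZ
open Finset
variable {n : ℕ}


def pairs (n : ℕ) : Finset (Fin n × Fin n) := Finset.univ.filter fun p => p.1 < p.2

def invSet (w : Equiv.Perm (Fin n)) : Finset (Fin n × Fin n) :=
  Finset.univ.filter fun p => p.1 < p.2 ∧ w.symm p.2 < w.symm p.1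

lemma mem_invSet {w : Equiv.Perm (Fin n)} {p : Fin n × Fin n} :
    p ∈ invSet w ↔ p.1 < p.2 ∧ w.symm p.2 < w.symm p.1 := by simp [invSet]

lemma invSet_one : invSet (1 : Equiv.Perm (Fin n)) = ∅ := by
  ext p
  simp only [mem_invSet, notMem_empty, iff_false, not_and]
  intro h1
  simpa [Equiv.Perm.one_symm] using not_lt.2 h1.le

lemma invSet_subset_pairs (w : Equiv.Perm (Fin n)) : invSet w ⊆ pairs n := by
  intro p hp
  simp only [pairs, mem_filter, mem_univ, true_and]
  exact (mem_invSet.1 hp).1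

lemma swap_lt_iff {a : ℕ} (h : a + 1 < n) (q r : Fin n) (hqr : q ≠ r) :
    Equiv.swap ⟨a, Nat.lt_of_succ_lt h⟩ ⟨a + 1, h⟩ q <
      Equiv.swap ⟨a, Nat.lt_of_succ_lt h⟩ ⟨a + 1, h⟩ r ↔
    (¬((q : ℕ) = a ∧ (r : ℕ) = a + 1) ∧ (q < r ∨ ((q : ℕ) = a + 1 ∧ (r : ℕ) = a))) := by
  have hqr' : (q : ℕ) ≠ (r : ℕ) := fun hh => hqr (Fin.ext hh)
  simp only [Equiv.swap_apply_def, Fin.ext_iff, Fin.lt_def]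
  split_ifs <;> simp_all <;> omega

lemma symm_mul_sNat {a : ℕ} (h : a + 1 < n) (w : Equiv.Perm (Fin n)) (x : Fin n) :
    (w * sNat n a).symm x =
      Equiv.swap ⟨a, Nat.lt_of_succ_lt h⟩ ⟨a + 1, h⟩ (w.symm x) := by
  simp [sNat, h, Equiv.Perm.mul_def, Equiv.symm_trans_apply]

lemma mem_invSet_mul_sNat {a : ℕ} (h : a + 1 < n) (w : Equiv.Perm (Fin n)) (x y : Fin n) :
    ((x, y) ∈ invSet (w * sNat n a)) ↔
      x < y ∧ ¬(y = w ⟨a, Nat.lt_of_succ_lt h⟩ ∧ x = w ⟨a+1, h⟩) ∧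
        ((x, y) ∈ invSet w ∨ (y = w ⟨a+1, h⟩ ∧ x = w ⟨a, Nat.lt_of_succ_lt h⟩)) := by
  simp only [mem_invSet, symm_mul_sNat h]
  constructor
  · rintro ⟨hxy, hlt⟩
    refine ⟨hxy, ?_⟩
    rw [swap_lt_iff h _ _ (fun hh => absurd (w.symm.injective hh ▸ hxy) (lt_irrefl _))] at hlt
    obtain ⟨h1, h2⟩ := hlt
    constructor
    · rintro ⟨hy, hx⟩
      exact h1 ⟨by simp [hy], by simp [hx]⟩
    · rcases h2 with h2 | ⟨h2a, h2b⟩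
      · exact Or.inl ⟨hxy, h2⟩
      · refine Or.inr ⟨?_, ?_⟩
        · rw [← Equiv.apply_symm_apply w y]; congr 1; exact Fin.ext h2a
        · rw [← Equiv.apply_symm_apply w x]; congr 1; exact Fin.ext h2b
  · rintro ⟨hxy, h1, h2⟩
    refine ⟨hxy, ?_⟩
    rw [swap_lt_iff h _ _ (fun hh => absurd (w.symm.injective hh ▸ hxy) (lt_irrefl _))]
    constructor
    · rintro ⟨ha, hb⟩
      exact h1 ⟨by rw [← Equiv.apply_symm_apply w y]; congr 1; exact Fin.ext ha,
        by rw [← Equiv.apply_symm_apply w x]; congr 1; exact Fin.ext hb⟩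
    · rcases h2 with ⟨_, h2⟩ | ⟨h2a, h2b⟩
      · exact Or.inl h2
      · exact Or.inr ⟨by simp [h2a], by simp [h2b]⟩



lemma invSet_mul_sNat_of_lt {a : ℕ} (h : a + 1 < n) (w : Equiv.Perm (Fin n))
    (hc : w ⟨a, Nat.lt_of_succ_lt h⟩ < w ⟨a + 1, h⟩) :
    invSet (w * sNat n a)
        = insert (w ⟨a, Nat.lt_of_succ_lt h⟩, w ⟨a + 1, h⟩) (invSet w) ∧
      (w ⟨a, Nat.lt_of_succ_lt h⟩, w ⟨a + 1, h⟩) ∉ invSet w := by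
  set A : Fin n := ⟨a, Nat.lt_of_succ_lt h⟩ with hA
  set A' : Fin n := ⟨a + 1, h⟩ with hA'
  have hAA' : A < A' := by simp [hA, hA', Fin.lt_def]
  have hnm : (w A, w A') ∉ invSet w := by
    rw [mem_invSet]
    rintro ⟨-, h2⟩
    simp only [Equiv.symm_apply_apply] at h2
    exact absurd h2 (not_lt.2 hAA'.le)
  refine ⟨?_, hnm⟩
  ext ⟨x, y⟩
  rw [mem_invSet_mul_sNat h, mem_insert]
  constructor
  · rintro ⟨hxy, h1, h2 | ⟨h2a, h2b⟩⟩
    · exact Or.inr h2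
    · exact Or.inl (by rw [h2a, h2b])
  · rintro hmem
    rcases hmem with heq | hP
    · obtain ⟨hx, hy⟩ : x = w A ∧ y = w A' := by
        constructor <;> [exact congrArg Prod.fst heq; exact congrArg Prod.snd heq]
      subst hx; subst hy
      refine ⟨hc, ?_, Or.inr ⟨rfl, rfl⟩⟩
      rintro ⟨h1, -⟩
      exact absurd (w.injective h1) (by simp [hA, hA', Fin.ext_iff])
    · have hxy := (mem_invSet.1 hP).1
      refine ⟨hxy, ?_, Or.inl hP⟩
      rintro ⟨h1, h2⟩
      rw [h1, h2] at hxy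
      exact absurd hxy (not_lt.2 hc.le)

lemma invSet_mul_sNat_of_gt {a : ℕ} (h : a + 1 < n) (w : Equiv.Perm (Fin n))
    (hc : w ⟨a + 1, h⟩ < w ⟨a, Nat.lt_of_succ_lt h⟩) :
    invSet (w * sNat n a)
        = (invSet w).erase (w ⟨a + 1, h⟩, w ⟨a, Nat.lt_of_succ_lt h⟩) ∧
      (w ⟨a + 1, h⟩, w ⟨a, Nat.lt_of_succ_lt h⟩) ∈ invSet w := by
  set A : Fin n := ⟨a, Nat.lt_of_succ_lt h⟩ with hA
  set A' : Fin n := ⟨a + 1, h⟩ with hA'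
  have hAA' : A < A' := by simp [hA, hA', Fin.lt_def]
  have hm : (w A', w A) ∈ invSet w := by
    rw [mem_invSet]
    exact ⟨hc, by simpa using hAA'⟩
  refine ⟨?_, hm⟩
  ext ⟨x, y⟩
  rw [mem_invSet_mul_sNat h, mem_erase]
  constructor
  · rintro ⟨hxy, h1, h2 | ⟨h2a, h2b⟩⟩
    · refine ⟨?_, h2⟩
      intro heq
      exact h1 ⟨(congrArg Prod.snd heq : y = w A), (congrArg Prod.fst heq : x = w A')⟩
    · rw [h2a, h2b] at hxy
      exact absurd hxy (not_lt.2 hc.le)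
  · rintro ⟨hne, hP⟩
    have hxy := (mem_invSet.1 hP).1
    refine ⟨hxy, ?_, Or.inl hP⟩
    rintro ⟨h1, h2⟩
    exact hne (by rw [h1, h2])

lemma card_invSet_step {a : ℕ} (h : a + 1 < n) (w : Equiv.Perm (Fin n)) :
    (invSet (w * sNat n a)).card = (invSet w).card + 1 ∨
      (invSet w).card = (invSet (w * sNat n a)).card + 1 := by
  set A : Fin n := ⟨a, Nat.lt_of_succ_lt h⟩ with hA
  set A' : Fin n := ⟨a + 1, h⟩ with hA'
  have hne : w A ≠ w A' := fun hh =>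
    absurd (w.injective hh) (by simp [hA, hA', Fin.ext_iff])
  rcases hne.lt_or_gt with hc | hc
  · obtain ⟨he, hnm⟩ := invSet_mul_sNat_of_lt h w hc
    exact Or.inl (by rw [he, card_insert_of_notMem hnm])
  · obtain ⟨he, hm⟩ := invSet_mul_sNat_of_gt h w hc
    refine Or.inr ?_
    rw [he, card_erase_of_mem hm]
    have := card_pos.2 ⟨_, hm⟩
    omega

lemma subset_invSet_step {a : ℕ} (h : a + 1 < n) (w : Equiv.Perm (Fin n))
    (hcard : (invSet (w * sNat n a)).card = (invSet w).card + 1) :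
    invSet w ⊆ invSet (w * sNat n a) := by
  set A : Fin n := ⟨a, Nat.lt_of_succ_lt h⟩ with hA
  set A' : Fin n := ⟨a + 1, h⟩ with hA'
  have hne : w A ≠ w A' := fun hh =>
    absurd (w.injective hh) (by simp [hA, hA', Fin.ext_iff])
  rcases hne.lt_or_gt with hc | hc
  · obtain ⟨he, -⟩ := invSet_mul_sNat_of_lt h w hc
    rw [he]; exact subset_insert _ _
  · obtain ⟨he, hm⟩ := invSet_mul_sNat_of_gt h w hc
    exfalso
    rw [he, card_erase_of_mem hm] at hcard
    have := card_pos.2 ⟨_, hm⟩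
    omega

lemma wordProd_zero {l : ℕ} (ii : Fin l → ℕ) : wordProd n ii 0 = 1 := by
  simp [wordProd]

lemma wordProd_succ {l : ℕ} (ii : Fin l → ℕ) {k : ℕ} (hk : k < l) :
    wordProd n ii (k + 1) = wordProd n ii k * sNat n (ii ⟨k, hk⟩) := by
  unfold wordProd
  rw [List.prod_take_succ _ _ (by simpa using hk)]
  congr 1
  simp

lemma mem_image_iseg {u : Equiv.Perm (Fin n)} {j : ℕ} {c : Fin n} :
    c ∈ (iseg n j).image ⇑u ↔ (u.symm c : ℕ) < j := by
  constructor
  · rintro hm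
    obtain ⟨q, hq, rfl⟩ := mem_image.1 hm
    simpa [iseg] using by simpa [iseg] using hq
  · intro hc
    exact mem_image.2 ⟨u.symm c, by simpa [iseg] using hc, by simp⟩

lemma sep_of_invSubset (u v : Equiv.Perm (Fin n)) (hsub : invSet u ⊆ invSet v)
    (j j' : ℕ) : stronglySep ((iseg n j).image ⇑u) ((iseg n j').image ⇑v) := by
  left
  intro a ha b hb
  rw [mem_sdiff] at ha hb
  have ha1 := mem_image_iseg.1 ha.1
  have ha2 : ¬ ((v.symm a : ℕ) < j') := fun hh => ha.2 (mem_image_iseg.2 hh)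
  have hb1 := mem_image_iseg.1 hb.1
  have hb2 : ¬ ((u.symm b : ℕ) < j) := fun hh => hb.2 (mem_image_iseg.2 hh)
  by_contra hab
  have hne : a ≠ b := fun hh => hb.2 (hh ▸ ha.1)
  have hba : b < a := (not_lt.1 hab).lt_of_ne hne.symm
  have hu : u.symm a < u.symm b := by rw [Fin.lt_def]; omega
  have hmem : (b, a) ∈ invSet u := mem_invSet.2 ⟨hba, hu⟩
  have h2 : v.symm a < v.symm b := (mem_invSet.1 (hsub hmem)).2
  rw [Fin.lt_def] at h2
  omega



lemma card_pairs (n : ℕ) : (pairs n).card = n * (n - 1) / 2 := by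
  classical
  have h1 : (pairs n).card
      = ((Finset.univ : Finset (Fin n × Fin n)).filter fun p => p.2 < p.1).card := by
    apply Finset.card_nbij (i := Prod.swap)
    · intro p hp
      simp only [pairs, mem_filter, mem_univ, true_and] at hp ⊢
      simpa using hp
    · intro p hp q hq hpq
      exact Prod.swap_injective hpq
    · intro p hp
      simp only [Set.mem_image, mem_coe, pairs, mem_filter, mem_univ, true_and] at hp ⊢
      exact ⟨p.swap, hp, by simp⟩
  have h2 : (pairs n) ∪ ((Finset.univ : Finset (Fin n × Fin n)).filter fun p => p.2 < p.1)
      = (Finset.univ : Finset (Fin n)).offDiag := by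
    ext p
    simp only [pairs, mem_union, mem_filter, mem_univ, true_and, Finset.mem_offDiag, ne_eq]
    exact lt_or_lt_iff_ne
  have h3 : Disjoint (pairs n) ((Finset.univ : Finset (Fin n × Fin n)).filter fun p => p.2 < p.1) := by
    rw [Finset.disjoint_left]
    intro p hp hp2
    simp only [pairs, mem_filter, mem_univ, true_and] at hp hp2
    exact absurd hp2 (not_lt.2 hp.le)
  have h4 := Finset.card_union_of_disjoint h3
  rw [h2] at h4
  rw [Finset.offDiag_card, card_univ, Fintype.card_fin] at h4
  have h5 : n * (n - 1) = n * n - n := by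
    cases n with
    | zero => simp
    | succ m =>
      simp only [Nat.add_sub_cancel]
      have : (m+1) * (m+1) = (m+1) * m + (m+1) := by ring
      omega
  omega

lemma invSet_revPerm : invSet (Fin.revPerm : Equiv.Perm (Fin n)) = pairs n := by
  ext p
  simp only [mem_invSet, pairs, mem_filter, mem_univ, true_and, Fin.revPerm_symm,
    Fin.revPerm_apply, Fin.rev_lt_rev, and_iff_left_iff_imp]
  exact fun h => h

lemma perm_eq_of_strictMono (u : Equiv.Perm (Fin n)) (h : StrictMono ⇑u) : ⇑u = id := by
  apply (StrictMono.range_inj h strictMono_id).1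
  rw [Set.range_id]
  exact u.surjective.range_eq

lemma strictMono_of_adj {α : Type*} [Preorder α] {f : Fin n → α}
    (hf : ∀ a : ℕ, ∀ h : a + 1 < n, f ⟨a, Nat.lt_of_succ_lt h⟩ < f ⟨a + 1, h⟩) :
    StrictMono f := by
  cases n with
  | zero => exact fun x => x.elim0
  | succ m =>
    rw [Fin.strictMono_iff_lt_succ]
    intro i
    have := hf i.1 (by omega)
    convert this using 2 <;> simp [Fin.ext_iff]

/-- If `v.symm ∘ u` increases along adjacent positions then `u = v`. -/
lemma eq_of_adj (u v : Equiv.Perm (Fin n))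
    (H : ∀ a : ℕ, ∀ h : a + 1 < n,
      v.symm (u ⟨a, Nat.lt_of_succ_lt h⟩) < v.symm (u ⟨a + 1, h⟩)) : u = v := by
  have hsm : StrictMono fun x => v.symm (u x) := strictMono_of_adj H
  have := perm_eq_of_strictMono (u.trans v.symm) hsm
  ext x
  have hx : v.symm (u x) = x := congrFun this x
  conv_rhs => rw [← hx]
  rw [Equiv.apply_symm_apply]

lemma invSet_full (w : Equiv.Perm (Fin n)) (h : invSet w = pairs n) :
    w = Fin.revPerm := by
  have H : ∀ a : ℕ, ∀ hh : a + 1 < n,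
      Fin.revPerm.symm (w ⟨a, Nat.lt_of_succ_lt hh⟩) < Fin.revPerm.symm (w ⟨a + 1, hh⟩) := by
    intro a hh
    set A : Fin n := ⟨a, Nat.lt_of_succ_lt hh⟩ with hA
    set A' : Fin n := ⟨a + 1, hh⟩ with hA'
    have hAA' : A < A' := by simp [hA, hA', Fin.lt_def]
    have hne : w A ≠ w A' := fun h2 => absurd (w.injective h2) (by simp [hA, hA', Fin.ext_iff])
    simp only [Fin.revPerm_symm, Fin.revPerm_apply, Fin.rev_lt_rev]
    rcases hne.lt_or_gt with hc | hc
    · -- w A < w A': (w A, w A') is a pair, so must be an inversion: symm (w A') < symm (w A): A' < A, contra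
      exfalso
      have : (w A, w A') ∈ invSet w := by
        rw [h]
        simp [pairs, hc]
      have h2 := (mem_invSet.1 this).2
      simp only [Equiv.symm_apply_apply] at h2
      exact absurd h2 (not_lt.2 hAA'.le)
    · exact hc
  exact eq_of_adj w Fin.revPerm H



lemma card_iseg {j : ℕ} (hj : j ≤ n) : (iseg n j).card = j := by
  have he : iseg n j = (Finset.univ : Finset (Fin j)).map (Fin.castLEEmb hj) := by
    ext a
    simp only [iseg, mem_filter, mem_univ, true_and]
    rw [Finset.mem_map]
    constructor
    · intro hja
      exact ⟨⟨(a : ℕ), hja⟩, mem_univ _, Fin.ext rfl⟩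
    · rintro ⟨i, -, rfl⟩
      exact i.2
  rw [he, Finset.card_map, card_univ, Fintype.card_fin]

lemma exists_adj (Q : Fin n → Prop) [DecidablePred Q] {q r : Fin n}
    (hq : ¬ Q q) (hr : Q r) (hqr : q < r) :
    ∃ a : ℕ, ∃ h : a + 1 < n, ¬ Q ⟨a, Nat.lt_of_succ_lt h⟩ ∧ Q ⟨a + 1, h⟩ := by
  by_contra hcon
  push_neg at hcon
  have key : ∀ m, ∀ hm : (q : ℕ) + m < n, ¬ Q ⟨(q : ℕ) + m, hm⟩ := by
    intro m
    induction m with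
    | zero =>
      intro hm
      have he : (⟨(q : ℕ) + 0, hm⟩ : Fin n) = q := by simp [Fin.ext_iff]
      rw [he]; exact hq
    | succ m ih =>
      intro hm
      exact hcon ((q : ℕ) + m) hm (ih (by omega))
  have h2 : (q : ℕ) + ((r : ℕ) - (q : ℕ)) < n := by have := r.2; omega
  have h3 : (⟨(q : ℕ) + ((r : ℕ) - (q : ℕ)), h2⟩ : Fin n) = r := by
    have := hqr.le
    rw [Fin.le_def] at this
    simp only [Fin.ext_iff]
    omega
  exact key _ h2 (by rw [h3]; exact hr)

lemma image_of_sorted (u : Equiv.Perm (Fin n)) (C : Finset (Fin n))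
    (hC : ∀ c ∈ C, ∀ d, d ∉ C → u.symm c < u.symm d) :
    (iseg n C.card).image ⇑u = C := by
  have hCn : C.card ≤ n := le_trans (Finset.card_le_univ C) (by simp)
  have hsub : C ⊆ (iseg n C.card).image ⇑u := by
    intro c hc
    rw [mem_image_iseg]
    by_contra hge
    push_neg at hge
    have hmap : ∀ q : Fin n, q ≤ u.symm c → u q ∈ C := by
      intro q hqle
      by_contra hqn
      have h2 := hC c hc (u q) hqn
      rw [Equiv.symm_apply_apply] at h2
      exact absurd (h2.trans_le hqle) (lt_irrefl _)
    have himg : (iseg n ((u.symm c : ℕ) + 1)).image ⇑u ⊆ C := by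
      intro x hx
      obtain ⟨q, hq, rfl⟩ := mem_image.1 hx
      apply hmap
      have hq2 : (q : ℕ) < (u.symm c : ℕ) + 1 := by simpa [iseg] using hq
      rw [Fin.le_def]; omega
    have hcard := card_le_card himg
    have hn2 : (u.symm c : ℕ) + 1 ≤ n := (u.symm c).2
    rw [Finset.card_image_of_injective _ u.injective, card_iseg hn2] at hcard
    omega
  have hcard2 : ((iseg n C.card).image ⇑u).card ≤ C.card := by
    rw [Finset.card_image_of_injective _ u.injective, card_iseg hCn]
  exact (Finset.eq_of_subset_of_card_le hsub hcard2).symm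

/-- the forced new inversions of `C` -/
def aSet (C : Finset (Fin n)) : Finset (Fin n × Fin n) :=
  (pairs n).filter fun p => p.1 ∉ C ∧ p.2 ∈ C

/-- the forbidden inversions of `C` -/
def bSet (C : Finset (Fin n)) : Finset (Fin n × Fin n) :=
  (pairs n).filter fun p => p.1 ∈ C ∧ p.2 ∉ C

lemma serve (C : Finset (Fin n)) : ∀ m, ∀ u : Equiv.Perm (Fin n),
    ((aSet C) \ invSet u).card = m →
    (∀ p ∈ invSet u, p ∉ bSet C) →
    ∃ v, invSet v = invSet u ∪ aSet C ∧ (iseg n C.card).image ⇑v = C := by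
  intro m
  induction m with
  | zero =>
    intro u hm hdisj
    have hsub : aSet C ⊆ invSet u := by
      rw [← Finset.sdiff_eq_empty_iff_subset]
      exact Finset.card_eq_zero.1 hm
    refine ⟨u, by rw [Finset.union_eq_left.2 hsub], ?_⟩
    apply image_of_sorted
    intro c hc d hd
    rcases lt_trichotomy c d with hcd | hcd | hcd
    · have hb : (c, d) ∈ bSet C := by
        simp only [bSet, pairs, mem_filter, mem_univ, true_and]
        exact ⟨hcd, hc, hd⟩
      have hni : (c, d) ∉ invSet u := fun hmem => hdisj _ hmem hb
      rw [mem_invSet] at hni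
      push_neg at hni
      have h2 := hni hcd
      exact lt_of_le_of_ne h2 (fun hh => (hcd.ne (u.symm.injective hh)).elim)
    · exact absurd (hcd ▸ hc) hd
    · have ha : (d, c) ∈ aSet C := by
        simp only [aSet, pairs, mem_filter, mem_univ, true_and]
        exact ⟨hcd, hd, hc⟩
      exact (mem_invSet.1 (hsub ha)).2
  | succ m ih =>
    intro u hm hdisj
    have hne : ((aSet C) \ invSet u).Nonempty := by rw [← card_pos, hm]; omega
    obtain ⟨⟨x, y⟩, hp⟩ := hne
    rw [mem_sdiff] at hp
    have hpa := hp.1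
    simp only [aSet, pairs, mem_filter, mem_univ, true_and] at hpa
    obtain ⟨hxy, hxC, hyC⟩ := hpa
    have hpos : u.symm x < u.symm y := by
      have hni := hp.2
      rw [mem_invSet] at hni
      push_neg at hni
      have h2 := hni hxy
      exact lt_of_le_of_ne h2 (fun hh => (hxy.ne (u.symm.injective hh)).elim)
    obtain ⟨a, h, hnQ, hQ⟩ := exists_adj (fun z => u z ∈ C) (q := u.symm x) (r := u.symm y)
      (by simpa using hxC) (by simpa using hyC) hpos
    have hneAA : u ⟨a, Nat.lt_of_succ_lt h⟩ ≠ u ⟨a + 1, h⟩ :=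
      fun hh => absurd (u.injective hh) (by simp [Fin.ext_iff])
    have hasc : u ⟨a, Nat.lt_of_succ_lt h⟩ < u ⟨a + 1, h⟩ := by
      rcases hneAA.lt_or_gt with hc | hc
      · exact hc
      · exfalso
        have hmem : (u ⟨a + 1, h⟩, u ⟨a, Nat.lt_of_succ_lt h⟩) ∈ invSet u := by
          rw [mem_invSet]
          refine ⟨hc, ?_⟩
          simp only [Equiv.symm_apply_apply]
          simp [Fin.lt_def]
        have hbm : (u ⟨a + 1, h⟩, u ⟨a, Nat.lt_of_succ_lt h⟩) ∈ bSet C := by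
          simp only [bSet, pairs, mem_filter, mem_univ, true_and]
          exact ⟨hc, hQ, hnQ⟩
        exact hdisj _ hmem hbm
    obtain ⟨heq, hnm⟩ := invSet_mul_sNat_of_lt h u hasc
    have hpair_a : (u ⟨a, Nat.lt_of_succ_lt h⟩, u ⟨a + 1, h⟩) ∈ aSet C := by
      simp only [aSet, pairs, mem_filter, mem_univ, true_and]
      exact ⟨hasc, hnQ, hQ⟩
    have hdisj' : ∀ p ∈ invSet (u * sNat n a), p ∉ bSet C := by
      intro p hpm
      rw [heq, mem_insert] at hpm
      rcases hpm with rfl | hpm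
      · intro hb
        simp only [bSet, pairs, mem_filter, mem_univ, true_and] at hb
        exact hnQ hb.2.1
      · exact hdisj _ hpm
    have hm' : ((aSet C) \ invSet (u * sNat n a)).card = m := by
      rw [heq, Finset.sdiff_insert,
        Finset.card_erase_of_mem (by rw [mem_sdiff]; exact ⟨hpair_a, hnm⟩), hm]
      omega
    obtain ⟨v, hv1, hv2⟩ := ih (u * sNat n a) hm' hdisj'
    refine ⟨v, ?_, hv2⟩
    rw [hv1, heq, Finset.insert_union]
    exact Finset.insert_eq_self.2 (mem_union_right _ hpair_a)

lemma adj_comparison (u v : Equiv.Perm (Fin n)) (hsub : invSet u ⊆ invSet v)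
    (hcon : ∀ a : ℕ, ∀ h : a + 1 < n,
      ¬(u ⟨a, Nat.lt_of_succ_lt h⟩ < u ⟨a + 1, h⟩ ∧
        (u ⟨a, Nat.lt_of_succ_lt h⟩, u ⟨a + 1, h⟩) ∈ invSet v)) : u = v := by
  apply eq_of_adj
  intro a h
  have hne : u ⟨a, Nat.lt_of_succ_lt h⟩ ≠ u ⟨a + 1, h⟩ :=
    fun hh => absurd (u.injective hh) (by simp [Fin.ext_iff])
  rcases hne.lt_or_gt with hc | hc
  · have hpm : (u ⟨a, Nat.lt_of_succ_lt h⟩, u ⟨a + 1, h⟩) ∉ invSet v :=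
      fun hmem => hcon a h ⟨hc, hmem⟩
    rw [mem_invSet] at hpm
    push_neg at hpm
    have h2 := hpm hc
    exact lt_of_le_of_ne h2 (fun hh => hne (v.symm.injective hh))
  · have hmem : (u ⟨a + 1, h⟩, u ⟨a, Nat.lt_of_succ_lt h⟩) ∈ invSet u := by
      rw [mem_invSet]
      refine ⟨hc, ?_⟩
      simp only [Equiv.symm_apply_apply]
      simp [Fin.lt_def]
    exact (mem_invSet.1 (hsub hmem)).2

lemma chain : ∀ m, ∀ u v : Equiv.Perm (Fin n), invSet u ⊆ invSet v →
    (invSet v).card = (invSet u).card + m →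
    ∃ ls : List ℕ, ls.length = m ∧ (∀ a ∈ ls, a + 1 < n) ∧
      u * (ls.map (sNat n)).prod = v := by
  intro m
  induction m with
  | zero =>
    intro u v hsub hcard
    have heq : invSet u = invSet v := Finset.eq_of_subset_of_card_le hsub (by omega)
    have huv : u = v := by
      apply adj_comparison u v hsub
      rintro a h ⟨hasc, hmem⟩
      rw [← heq, mem_invSet] at hmem
      have h2 := hmem.2
      simp only [Equiv.symm_apply_apply] at h2
      rw [Fin.lt_def] at h2
      have h3 : a + 1 < a := h2
      omega
    exact ⟨[], rfl, by simp, by simp [huv]⟩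
  | succ m ih =>
    intro u v hsub hcard
    have hexists : ∃ a : ℕ, ∃ h : a + 1 < n,
        u ⟨a, Nat.lt_of_succ_lt h⟩ < u ⟨a + 1, h⟩ ∧
          (u ⟨a, Nat.lt_of_succ_lt h⟩, u ⟨a + 1, h⟩) ∈ invSet v := by
      by_contra hcon
      push_neg at hcon
      have huv : u = v := adj_comparison u v hsub (by
        intro a h
        rintro ⟨h1, h2⟩
        exact absurd h2 (hcon a h h1))
      rw [huv] at hcard
      omega
    obtain ⟨a, h, hasc, hpv⟩ := hexists
    obtain ⟨heq, hnm⟩ := invSet_mul_sNat_of_lt h u hasc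
    have hsub' : invSet (u * sNat n a) ⊆ invSet v := by
      rw [heq]
      exact Finset.insert_subset hpv hsub
    have hcard' : (invSet v).card = (invSet (u * sNat n a)).card + m := by
      rw [heq, card_insert_of_notMem hnm]
      omega
    obtain ⟨ls, hlen, hletters, hprod⟩ := ih (u * sNat n a) v hsub' hcard'
    refine ⟨a :: ls, by simp [hlen], ?_, ?_⟩
    · intro b hb
      rcases List.mem_cons.1 hb with rfl | hb
      · exact h
      · exact hletters b hb
    · rw [List.map_cons, List.prod_cons, ← mul_assoc]
      exact hprod

/-- rank for the lexicographic order -/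
def keyF (n : ℕ) (C : Finset (Fin n)) : ℕ := ∑ z ∈ C, 2 ^ (n - 1 - (z : ℕ))

lemma sum_pow2 (k : ℕ) : ∑ i ∈ Finset.range k, 2 ^ i = 2 ^ k - 1 := by
  induction k with
  | zero => simp
  | succ k ih =>
    rw [Finset.sum_range_succ, ih, pow_succ]
    have : 0 < 2 ^ k := Nat.pow_pos (by norm_num)
    omega

lemma sum_pow_lt (a : Fin n) (S : Finset (Fin n)) (hS : ∀ z ∈ S, a < z) :
    ∑ z ∈ S, 2 ^ (n - 1 - (z : ℕ)) < 2 ^ (n - 1 - (a : ℕ)) := by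
  have hinj : ∀ z ∈ S, ∀ w ∈ S, n - 1 - (z : ℕ) = n - 1 - (w : ℕ) → z = w := by
    intro z _ w _ hzw
    have hz := z.2
    have hw := w.2
    rw [Fin.ext_iff]
    omega
  have h1 : ∑ z ∈ S, 2 ^ (n - 1 - (z : ℕ))
      = ∑ i ∈ S.image (fun z : Fin n => n - 1 - (z : ℕ)), 2 ^ i :=
    (Finset.sum_image hinj).symm
  have h2 : S.image (fun z : Fin n => n - 1 - (z : ℕ)) ⊆ Finset.range (n - 1 - (a : ℕ)) := by
    intro i hi
    obtain ⟨z, hz, rfl⟩ := mem_image.1 hi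
    have haz := hS z hz
    rw [Fin.lt_def] at haz
    have hz2 := z.2
    rw [Finset.mem_range]
    omega
  calc ∑ z ∈ S, 2 ^ (n - 1 - (z : ℕ))
      = ∑ i ∈ S.image (fun z : Fin n => n - 1 - (z : ℕ)), 2 ^ i := h1
    _ ≤ ∑ i ∈ Finset.range (n - 1 - (a : ℕ)), 2 ^ i :=
        Finset.sum_le_sum_of_subset h2
    _ < 2 ^ (n - 1 - (a : ℕ)) := by
        rw [sum_pow2]
        have : 0 < 2 ^ (n - 1 - (a : ℕ)) := Nat.pow_pos (by norm_num)
        omega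

lemma key_lt {C C' : Finset (Fin n)} (hss : ∀ a ∈ C' \ C, ∀ b ∈ C \ C', a < b)
    (hne : (C' \ C).Nonempty) : keyF n C < keyF n C' := by
  classical
  have hmin := Finset.min'_mem _ hne
  set a := (C' \ C).min' hne with ha
  have h1 : ∑ z ∈ C ∩ C', 2 ^ (n - 1 - (z : ℕ)) + ∑ z ∈ C \ C', 2 ^ (n - 1 - (z : ℕ))
      = keyF n C := Finset.sum_inter_add_sum_sdiff C C' _
  have h2 : ∑ z ∈ C' ∩ C, 2 ^ (n - 1 - (z : ℕ)) + ∑ z ∈ C' \ C, 2 ^ (n - 1 - (z : ℕ))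
      = keyF n C' := Finset.sum_inter_add_sum_sdiff C' C _
  rw [Finset.inter_comm] at h2
  have h3 : ∑ z ∈ C \ C', 2 ^ (n - 1 - (z : ℕ)) < ∑ z ∈ C' \ C, 2 ^ (n - 1 - (z : ℕ)) := by
    calc ∑ z ∈ C \ C', 2 ^ (n - 1 - (z : ℕ)) < 2 ^ (n - 1 - (a : ℕ)) :=
          sum_pow_lt a _ (fun z hz => hss a hmin z hz)
      _ ≤ ∑ z ∈ C' \ C, 2 ^ (n - 1 - (z : ℕ)) :=
          Finset.single_le_sum (f := fun z : Fin n => 2 ^ (n - 1 - (z : ℕ)))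
            (fun i _ => Nat.zero_le _) hmin
  omega


lemma wordProd_invSet_mono {l : ℕ} (ii : Fin l → ℕ) (hv : ∀ k, ii k + 1 < n)
    (hrev : wordProd n ii l = Fin.revPerm) (hl : (pairs n).card = l) :
    ∀ {k m : ℕ}, k ≤ m → m ≤ l →
      invSet (wordProd n ii k) ⊆ invSet (wordProd n ii m) := by
  have hub : ∀ k, k ≤ l → (invSet (wordProd n ii k)).card ≤ k := by
    intro k
    induction k with
    | zero => intro _; simp [wordProd_zero, invSet_one]
    | succ k ih =>
      intro hk
      have hk' : k < l := hk
      rw [wordProd_succ ii hk']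
      rcases card_invSet_step (hv ⟨k, hk'⟩) (wordProd n ii k) with hc | hc
      · rw [hc]; exact Nat.succ_le_succ (ih (le_of_lt hk'))
      · have := ih (le_of_lt hk'); omega
  have hlb : ∀ d k, k + d = l → l ≤ (invSet (wordProd n ii k)).card + d := by
    intro d
    induction d with
    | zero =>
      intro k hk
      have hkl : k = l := by omega
      subst hkl
      rw [hrev, invSet_revPerm]
      omega
    | succ d ih =>
      intro k hk
      have hk' : k < l := by omega
      have h2 := ih (k + 1) (by omega)
      rw [wordProd_succ ii hk'] at h2
      rcases card_invSet_step (hv ⟨k, hk'⟩) (wordProd n ii k) with hc | hc <;> omega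
  have hcard : ∀ k, k ≤ l → (invSet (wordProd n ii k)).card = k := by
    intro k hk
    have h1 := hub k hk
    have h2 := hlb (l - k) k (by omega)
    omega
  have hstep : ∀ k, ∀ _ : k < l, invSet (wordProd n ii k) ⊆ invSet (wordProd n ii (k + 1)) := by
    intro k hk
    have h1 := hcard k hk.le
    have h2 := hcard (k + 1) hk
    rw [wordProd_succ ii hk] at h2 ⊢
    exact subset_invSet_step (hv ⟨k, hk⟩) _ (by omega)
  intro k m hkm hml
  induction m, hkm using Nat.le_induction with
  | base => exact subset_rfl
  | succ m hm ih2 => exact (ih2 (by omega)).trans (hstep m (by omega))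

lemma sNat_image_iseg {a j : ℕ} (hne : a + 1 ≠ j) :
    (iseg n j).image ⇑(sNat n a) = iseg n j := by
  by_cases h : a + 1 < n
  · rw [sNat, dif_pos h]
    have hstable : ∀ x ∈ iseg n j,
        Equiv.swap ⟨a, Nat.lt_of_succ_lt h⟩ ⟨a + 1, h⟩ x ∈ iseg n j := by
      intro x hx
      simp only [iseg, mem_filter, mem_univ, true_and] at hx ⊢
      rw [Equiv.swap_apply_def]
      split_ifs with h1 h2
      · have := congrArg Fin.val h1
        simp only at this
        simp only
        omega
      · have := congrArg Fin.val h2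
        simp only at this
        simp only
        omega
      · exact hx
    have hsub : (iseg n j).image ⇑(Equiv.swap ⟨a, Nat.lt_of_succ_lt h⟩ ⟨a + 1, h⟩) ⊆ iseg n j := by
      intro c hc
      obtain ⟨q, hq, rfl⟩ := mem_image.1 hc
      exact hstable q hq
    exact Finset.eq_of_subset_of_card_le hsub
      (le_of_eq (Finset.card_image_of_injective _ (Equiv.injective _)).symm)
  · rw [sNat, dif_neg h]
    simp

lemma image_mem_fullChamberFam {l : ℕ} (ii : Fin l → ℕ) {k j : ℕ}
    (hk : k ≤ l) (hj1 : 1 ≤ j) (hjn : j ≤ n) :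
    (iseg n j).image ⇑(wordProd n ii k) ∈ fullChamberFam n ii := by
  induction k with
  | zero =>
    rw [wordProd_zero]
    apply mem_union_left
    rw [mem_image]
    refine ⟨⟨j - 1, by omega⟩, mem_univ _, ?_⟩
    have hj : (j - 1) + 1 = j := by omega
    simp only [hj]
    simp
  | succ k ih =>
    have hk' : k < l := hk
    by_cases hcase : ii ⟨k, hk'⟩ + 1 = j
    · apply mem_union_right
      rw [mem_image]
      refine ⟨⟨k, hk'⟩, mem_univ _, ?_⟩
      rw [chamberSet]
      simp only [hcase]
    · rw [wordProd_succ ii hk']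
      have himg : (iseg n j).image ⇑(wordProd n ii k * sNat n (ii ⟨k, hk'⟩))
          = (iseg n j).image ⇑(wordProd n ii k) := by
        have hco : ⇑(wordProd n ii k * sNat n (ii ⟨k, hk'⟩))
            = ⇑(wordProd n ii k) ∘ ⇑(sNat n (ii ⟨k, hk'⟩)) := rfl
        rw [hco, ← Finset.image_image, sNat_image_iseg hcase]
      rw [himg]
      exact ih (le_of_lt hk')

lemma rec_serve : ∀ r : ℕ, ∀ D : Finset (Finset (Fin n)), D.card = r →
    (∀ C ∈ D, ∀ C' ∈ D, stronglySep C C') →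
    ∀ u : Equiv.Perm (Fin n), (∀ C ∈ D, ∀ p ∈ invSet u, p ∉ bSet C) →
    ∃ ls : List ℕ, ∃ v : Equiv.Perm (Fin n),
      (∀ a ∈ ls, a + 1 < n) ∧
      u * (ls.map (sNat n)).prod = v ∧
      ls.length + (invSet u).card = (invSet v).card ∧
      invSet u ⊆ invSet v ∧
      (∀ C ∈ D, ∃ k, k ≤ ls.length ∧
        (iseg n C.card).image ⇑(u * ((ls.take k).map (sNat n)).prod) = C) := by
  intro r
  induction r with
  | zero =>
    intro D hD _ u _
    have hDe : D = ∅ := card_eq_zero.1 hD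
    subst hDe
    exact ⟨[], u, by simp, by simp, by simp, subset_rfl, by simp⟩
  | succ r ih =>
    intro D hDcard hsep u hdisj
    have hDne : D.Nonempty := card_pos.1 (by omega)
    obtain ⟨C, hCD, hCmax⟩ := Finset.exists_max_image D (keyF n) hDne
    obtain ⟨v1, hv1inv, hv1img⟩ := serve C _ u rfl (hdisj C hCD)
    have hsub1 : invSet u ⊆ invSet v1 := by rw [hv1inv]; exact Finset.subset_union_left
    have hcardv1 : (invSet v1).card = (invSet u).card + (aSet C \ invSet u).card := by
      rw [hv1inv]
      have := Finset.card_sdiff_add_card (aSet C) (invSet u)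
      rw [Finset.union_comm]
      omega
    obtain ⟨ls1, hlen1, hlet1, hprod1⟩ :=
      chain ((aSet C \ invSet u).card) u v1 hsub1 hcardv1
    have hkey : ∀ C' ∈ D.erase C, ∀ p ∈ aSet C, p ∉ bSet C' := by
      intro C' hC' p hpA hpB
      have hC'D := mem_of_mem_erase hC'
      have hCne : C ≠ C' := (ne_of_mem_erase hC').symm
      obtain ⟨x, y⟩ := p
      simp only [aSet, bSet, pairs, mem_filter, mem_univ, true_and] at hpA hpB
      have hx : x ∈ C' \ C := mem_sdiff.2 ⟨hpB.2.1, hpA.2.1⟩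
      have hy : y ∈ C \ C' := mem_sdiff.2 ⟨hpA.2.2, hpB.2.2⟩
      have hss : ∀ a ∈ C' \ C, ∀ b ∈ C \ C', a < b := by
        rcases hsep C hCD C' hC'D with h1 | h1
        · exact absurd hpA.1 (not_lt.2 (h1 y hy x hx).le)
        · exact h1
      exact absurd (hCmax C' hC'D) (not_le.2 (key_lt hss ⟨x, hx⟩))
    have hdisj2 : ∀ C' ∈ D.erase C, ∀ p ∈ invSet v1, p ∉ bSet C' := by
      intro C' hC' p hp
      rw [hv1inv, mem_union] at hp
      rcases hp with hp | hp
      · exact hdisj C' (mem_of_mem_erase hC') p hp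
      · exact hkey C' hC' p hp
    obtain ⟨ls2, v2, hlet2, hprod2, hlen2, hsub2, hreal2⟩ :=
      ih (D.erase C) (by rw [card_erase_of_mem hCD, hDcard]; omega)
        (fun a ha b hb => hsep a (mem_of_mem_erase ha) b (mem_of_mem_erase hb)) v1 hdisj2
    refine ⟨ls1 ++ ls2, v2, ?_, ?_, ?_, hsub1.trans hsub2, ?_⟩
    · intro b hb
      rcases List.mem_append.1 hb with hb | hb
      exacts [hlet1 b hb, hlet2 b hb]
    · rw [List.map_append, List.prod_append, ← mul_assoc, hprod1]
      exact hprod2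
    · rw [List.length_append]
      omega
    · intro C' hC'
      by_cases hC'C : C' = C
      · subst hC'C
        refine ⟨ls1.length, by simp, ?_⟩
        rw [List.take_left, hprod1]
        exact hv1img
      · obtain ⟨k, hk, himg⟩ := hreal2 C' (mem_erase.2 ⟨hC'C, hC'⟩)
        refine ⟨ls1.length + k, by simp [hk], ?_⟩
        rw [List.take_append, List.take_of_length_le (Nat.le_add_right ls1.length k),
          Nat.add_sub_cancel_left, List.map_append, List.prod_append, ← mul_assoc, hprod1]
        exact himg


lemma wordProd_getD (L : List ℕ) {N : ℕ} (hL : L.length = N) (k : ℕ) :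
    wordProd n (fun t : Fin N => L.getD (t : ℕ) 0) k = ((L.take k).map (sNat n)).prod := by
  have hofn : (List.ofFn fun t : Fin N => sNat n (L.getD (t : ℕ) 0)) = L.map (sNat n) := by
    apply List.ext_getElem
    · simp [hL]
    · intro i h1 h2
      simp only [List.getElem_ofFn, List.getElem_map]
      congr 1
      have hi : i < L.length := by simpa using h2
      rw [List.getD_eq_getElem L 0 hi]
  rw [wordProd, hofn, ← List.map_take]

end LZ

/-- **Leclerc–Zelevinsky characterization.** A family `D` of nonempty subsets of `[n]` is
strongly separated iff there is a reduced word of the longest permutation `w₀` (of length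
`n(n-1)/2`, letters written 0-based) whose full chamber family contains `D`. -/
theorem leclerc_zelevinsky_chamber_characterization
    (n : ℕ) (hn : 1 ≤ n) (D : Finset (Finset (Fin n))) (hD : ∀ C ∈ D, C.Nonempty) :
    (∀ C ∈ D, ∀ C' ∈ D, stronglySep C C') ↔
      ∃ jj : Fin (n * (n - 1) / 2) → ℕ,
        (∀ k, jj k + 1 < n) ∧
        wordProd n jj (n * (n - 1) / 2) = (Fin.revPerm : Equiv.Perm (Fin n)) ∧
        D ⊆ fullChamberFam n jj := by
  classical
  constructor
  · intro hsep
    obtain ⟨ls, v, hlet, hprod, hlen, hsubv, hreal⟩ :=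
      LZ.rec_serve D.card D rfl hsep 1 (by simp [LZ.invSet_one])
    obtain ⟨ls3, hlen3, hlet3, hprod3⟩ :=
      LZ.chain ((LZ.pairs n).card - (LZ.invSet v).card) v Fin.revPerm
        (by rw [LZ.invSet_revPerm]; exact LZ.invSet_subset_pairs v)
        (by
          rw [LZ.invSet_revPerm]
          have := Finset.card_le_card (LZ.invSet_subset_pairs v)
          omega)
    set N := n * (n - 1) / 2 with hN
    set L := ls ++ ls3 with hLdef
    have hcard1 : (LZ.invSet (1 : Equiv.Perm (Fin n))).card = 0 := by
      simp [LZ.invSet_one]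
    have hvle : (LZ.invSet v).card ≤ (LZ.pairs n).card :=
      Finset.card_le_card (LZ.invSet_subset_pairs v)
    have hL : L.length = N := by
      rw [hLdef, List.length_append]
      have hp := LZ.card_pairs n
      omega
    refine ⟨fun k => L.getD (k : ℕ) 0, ?_, ?_, ?_⟩
    · intro k
      have hkN : (k : ℕ) < L.length := by rw [hL]; exact k.2
      have hmem : L.getD (k : ℕ) 0 ∈ L := by
        rw [List.getD_eq_getElem L 0 hkN]
        exact List.getElem_mem _
      rcases List.mem_append.1 hmem with h | h
      exacts [hlet _ h, hlet3 _ h]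
    · rw [LZ.wordProd_getD L hL, List.take_of_length_le (le_of_eq hL),
        List.map_append, List.prod_append]
      rw [one_mul] at hprod
      rw [hprod]
      exact hprod3
    · intro C hC
      obtain ⟨k, hk, himg⟩ := hreal C hC
      have hlsN : ls.length ≤ N := by
        rw [← hL, hLdef, List.length_append]
        omega
      have hkN : k ≤ N := le_trans hk hlsN
      have himg2 : (iseg n C.card).image
          ⇑(wordProd n (fun t : Fin N => L.getD (t : ℕ) 0) k) = C := by
        rw [LZ.wordProd_getD L hL, hLdef, List.take_append_of_le_length hk]
        simpa using himg
      rw [← himg2]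
      exact LZ.image_mem_fullChamberFam _ hkN (Finset.card_pos.2 (hD C hC))
        (le_trans (Finset.card_le_univ C) (by simp))
  · rintro ⟨jj, hlet, hprod, hsubD⟩ C hC C' hC'
    have hform : ∀ E ∈ fullChamberFam n jj, ∃ k j, k ≤ n * (n - 1) / 2 ∧
        E = (iseg n j).image ⇑(wordProd n jj k) := by
      intro E hE
      rw [fullChamberFam, Finset.mem_union] at hE
      rcases hE with hE | hE
      · obtain ⟨i, -, rfl⟩ := Finset.mem_image.1 hE
        exact ⟨0, (i : ℕ) + 1, Nat.zero_le _, by rw [LZ.wordProd_zero]; simp⟩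
      · obtain ⟨t, -, rfl⟩ := Finset.mem_image.1 hE
        exact ⟨(t : ℕ) + 1, jj t + 1, by have := t.2; omega, rfl⟩
    obtain ⟨k, j, hk, hCeq⟩ := hform C (hsubD hC)
    obtain ⟨k', j', hk', hC'eq⟩ := hform C' (hsubD hC')
    rcases le_total k k' with hkk | hkk
    · rw [hCeq, hC'eq]
      exact LZ.sep_of_invSubset _ _
        (LZ.wordProd_invSet_mono jj hlet hprod (LZ.card_pairs n) hkk hk') j j'
    · rw [hCeq, hC'eq]
      have hs := LZ.sep_of_invSubset _ _
        (LZ.wordProd_invSet_mono jj hlet hprod (LZ.card_pairs n) hkk hk) j' j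
      exact Or.symm hs

end BottSamelson
end
end

section
/- Let i = (i_1,…,i_l) be a reduced word of w = s_{i_1}⋯s_{i_l} ∈ S_n, with chamber sets C_k = w_k[i_k] for 1 ≤ k ≤ l. Then the stabilizer in B of the configuration of coordinate subspaces (E_{C_1},…,E_{C_l}) equals B ∩ wBw^{-1}; that is, {b ∈ B : b·E_{C_k} = E_{C_k} for all k = 1,…,l} = B ∩ wBw^{-1}. -/
open MvPolynomial

noncomputable section

namespace BottSamelson

-- ===== auxiliary lemmas for the stabilizer theorem =====

section StabAux

/-- Value inversions: pairs `(a,b)` with `a < b` whose positions are inverted. -/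
def vInv {n : ℕ} (w : Equiv.Perm (Fin n)) : Finset (Fin n × Fin n) :=
  Finset.univ.filter fun p => p.1 < p.2 ∧ w.symm p.2 < w.symm p.1

lemma mem_vInv {n : ℕ} {w : Equiv.Perm (Fin n)} {p : Fin n × Fin n} :
    p ∈ vInv w ↔ p.1 < p.2 ∧ w.symm p.2 < w.symm p.1 := by
  simp [vInv]

lemma vInv_card {n : ℕ} (w : Equiv.Perm (Fin n)) : (vInv w).card = invCount w := by
  unfold invCount
  apply Finset.card_bij' (fun p _ => (w.symm p.2, w.symm p.1))
    (fun p _ => (w p.2, w p.1))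
  · intro p hp
    simp only [vInv, Finset.mem_filter, Finset.mem_univ, true_and] at hp ⊢
    exact ⟨hp.2, by simpa using hp.1⟩
  · intro p hp
    simp only [vInv, Finset.mem_filter, Finset.mem_univ, true_and] at hp ⊢
    exact ⟨hp.2, by simpa using hp.1⟩
  · intro p hp; simp
  · intro p hp; simp

lemma vInv_one {n : ℕ} : vInv (1 : Equiv.Perm (Fin n)) = ∅ := by
  ext p
  simp only [mem_vInv, Finset.notMem_empty, iff_false]
  rintro ⟨h1, h2⟩
  change p.2 < p.1 at h2
  exact absurd h1 (not_lt.2 h2.le)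

lemma swap_lt_iff {n c : ℕ} (h : c + 1 < n) {x y : Fin n} (hne : x ≠ y)
    (h1 : ¬(x = ⟨c, Nat.lt_of_succ_lt h⟩ ∧ y = ⟨c+1, h⟩))
    (h2 : ¬(x = ⟨c+1, h⟩ ∧ y = ⟨c, Nat.lt_of_succ_lt h⟩)) :
    Equiv.swap ⟨c, Nat.lt_of_succ_lt h⟩ ⟨c+1, h⟩ x
      < Equiv.swap ⟨c, Nat.lt_of_succ_lt h⟩ ⟨c+1, h⟩ y ↔ x < y := by
  rcases x with ⟨xv, hxv⟩; rcases y with ⟨yv, hyv⟩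
  simp only [Equiv.swap_apply_def, Fin.lt_def, Fin.ext_iff, ne_eq, not_and, Fin.val_mk]
    at h1 h2 hne ⊢
  split_ifs <;> simp_all <;> omega

lemma mul_swap_symm_apply {n : ℕ} (u : Equiv.Perm (Fin n)) (a b x : Fin n) :
    (u * Equiv.swap a b).symm x = Equiv.swap a b (u.symm x) := by
  rw [Equiv.symm_apply_eq, Equiv.Perm.mul_apply, Equiv.swap_apply_self, Equiv.apply_symm_apply]
lemma vInv_mul_swap {n c : ℕ} (h : c + 1 < n) (u : Equiv.Perm (Fin n)) :
    (u ⟨c, Nat.lt_of_succ_lt h⟩ < u ⟨c+1, h⟩ ∧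
      (u ⟨c, Nat.lt_of_succ_lt h⟩, u ⟨c+1, h⟩) ∉ vInv u ∧
      vInv (u * Equiv.swap ⟨c, Nat.lt_of_succ_lt h⟩ ⟨c+1, h⟩)
        = insert (u ⟨c, Nat.lt_of_succ_lt h⟩, u ⟨c+1, h⟩) (vInv u)) ∨
    (u ⟨c+1, h⟩ < u ⟨c, Nat.lt_of_succ_lt h⟩ ∧
      (u ⟨c+1, h⟩, u ⟨c, Nat.lt_of_succ_lt h⟩) ∈ vInv u ∧
      vInv (u * Equiv.swap ⟨c, Nat.lt_of_succ_lt h⟩ ⟨c+1, h⟩)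
        = (vInv u).erase (u ⟨c+1, h⟩, u ⟨c, Nat.lt_of_succ_lt h⟩)) := by
  set c0 : Fin n := ⟨c, Nat.lt_of_succ_lt h⟩ with hc0
  set c1 : Fin n := ⟨c+1, h⟩ with hc1
  have hcc : c0 < c1 := by simp [hc0, hc1, Fin.lt_def]
  have hcc' : c0 ≠ c1 := ne_of_lt hcc
  have huc : u c0 ≠ u c1 := fun hh => hcc' (u.injective hh)
  have key : ∀ a b : Fin n,
      ((a, b) ∈ vInv (u * Equiv.swap c0 c1) ↔
        (a < b ∧ Equiv.swap c0 c1 (u.symm b) < Equiv.swap c0 c1 (u.symm a))) := by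
    intro a b
    rw [mem_vInv]
    simp only [mul_swap_symm_apply]
  rcases lt_or_gt_of_ne huc with hlt | hgt
  · left
    refine ⟨hlt, ?_, ?_⟩
    · rw [mem_vInv]
      rintro ⟨-, h2⟩
      simp only [Equiv.symm_apply_apply] at h2
      exact absurd hcc (not_lt.2 h2.le)
    · ext ⟨a, b⟩
      rw [key, Finset.mem_insert, mem_vInv, Prod.mk.injEq]
      by_cases hab : u.symm a = u.symm b
      · have hab' : a = b := by simpa using congrArg u hab
        subst hab'
        constructor
        · rintro ⟨h1', -⟩; exact absurd h1' (lt_irrefl _)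
        · rintro (⟨h1', h2'⟩ | ⟨h1', -⟩)
          · exact (huc (h1'.symm.trans h2')).elim
          · exact absurd h1' (lt_irrefl _)
      · by_cases hA : u.symm a = c0 ∧ u.symm b = c1
        · have ha : a = u c0 := by rw [← hA.1]; simp
          have hb : b = u c1 := by rw [← hA.2]; simp
          subst ha; subst hb
          constructor
          · intro _; left; exact ⟨rfl, rfl⟩
          · intro _
            refine ⟨hlt, ?_⟩
            rw [Equiv.symm_apply_apply, Equiv.symm_apply_apply,
              Equiv.swap_apply_right, Equiv.swap_apply_left]
            exact hcc
        · by_cases hB : u.symm a = c1 ∧ u.symm b = c0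
          · have ha : a = u c1 := by rw [← hB.1]; simp
            have hb : b = u c0 := by rw [← hB.2]; simp
            subst ha; subst hb
            constructor
            · rintro ⟨h1', -⟩
              exact absurd hlt (not_lt.2 h1'.le)
            · rintro (⟨h1', h2'⟩ | ⟨h1', -⟩)
              · exact (huc h2').elim
              · exact absurd hlt (not_lt.2 h1'.le)
          · have hsw := swap_lt_iff h (x := u.symm b) (y := u.symm a)
              (fun hh => hab hh.symm)
              (fun hh => hB ⟨hh.2, hh.1⟩) (fun hh => hA ⟨hh.2, hh.1⟩)
            rw [← hc0, ← hc1] at hsw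
            rw [hsw]
            constructor
            · rintro ⟨h1', h2'⟩; right; exact ⟨h1', h2'⟩
            · rintro (⟨h1', h2'⟩ | hh)
              · exfalso
                apply hA
                constructor
                · rw [h1']; simp
                · rw [h2']; simp
              · exact hh
  · right
    refine ⟨hgt, ?_, ?_⟩
    · rw [mem_vInv]
      exact ⟨hgt, by simpa using hcc⟩
    · ext ⟨a, b⟩
      rw [key]
      simp only [Finset.mem_erase, mem_vInv, ne_eq, Prod.mk.injEq]
      by_cases hab : u.symm a = u.symm b
      · have hab' : a = b := by simpa using congrArg u hab
        subst hab'
        constructor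
        · rintro ⟨h1', -⟩; exact absurd h1' (lt_irrefl _)
        · rintro ⟨-, h1', -⟩; exact absurd h1' (lt_irrefl _)
      · by_cases hA : u.symm a = c0 ∧ u.symm b = c1
        · have ha : a = u c0 := by rw [← hA.1]; simp
          have hb : b = u c1 := by rw [← hA.2]; simp
          subst ha; subst hb
          constructor
          · rintro ⟨h1', -⟩
            exact absurd h1' (not_lt.2 hgt.le)
          · rintro ⟨-, h2', -⟩
            exact absurd h2' (not_lt.2 hgt.le)
        · by_cases hB : u.symm a = c1 ∧ u.symm b = c0
          · have ha : a = u c1 := by rw [← hB.1]; simp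
            have hb : b = u c0 := by rw [← hB.2]; simp
            subst ha; subst hb
            constructor
            · rintro ⟨-, h2'⟩
              rw [Equiv.symm_apply_apply, Equiv.symm_apply_apply,
                Equiv.swap_apply_right, Equiv.swap_apply_left] at h2'
              exact absurd hcc (not_lt.2 h2'.le)
            · rintro ⟨h1', -⟩
              exact absurd ⟨rfl, rfl⟩ h1'
          · have hsw := swap_lt_iff h (x := u.symm b) (y := u.symm a)
              (fun hh => hab hh.symm)
              (fun hh => hB ⟨hh.2, hh.1⟩) (fun hh => hA ⟨hh.2, hh.1⟩)
            rw [← hc0, ← hc1] at hsw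
            rw [hsw]
            constructor
            · rintro ⟨h1', h2'⟩
              refine ⟨?_, h1', h2'⟩
              rintro ⟨ha', hb'⟩
              apply hB
              constructor
              · rw [ha']; simp
              · rw [hb']; simp
            · rintro ⟨-, h1', h2'⟩
              exact ⟨h1', h2'⟩


lemma wordProd_zero (n : ℕ) {l : ℕ} (ii : Fin l → ℕ) : wordProd n ii 0 = 1 := by
  simp [wordProd]

lemma wordProd_succ (n : ℕ) {l : ℕ} (ii : Fin l → ℕ) {k : ℕ} (hk : k < l) :
    wordProd n ii (k + 1) = wordProd n ii k * sNat n (ii ⟨k, hk⟩) := by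
  unfold wordProd
  rw [List.prod_take_succ _ _ (by simpa using hk)]
  congr 1
  simp

lemma sNat_eq {n a : ℕ} (h : a + 1 < n) :
    sNat n a = Equiv.swap ⟨a, Nat.lt_of_succ_lt h⟩ ⟨a + 1, h⟩ := by
  rw [sNat, dif_pos h]

variable {n l : ℕ} {ii : Fin l → ℕ}

lemma step_dich (hii : ∀ k, ii k + 1 < n) {k : ℕ} (hk : k < l) :
    (wordProd n ii k ⟨ii ⟨k, hk⟩, Nat.lt_of_succ_lt (hii ⟨k, hk⟩)⟩
        < wordProd n ii k ⟨ii ⟨k, hk⟩ + 1, hii ⟨k, hk⟩⟩ ∧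
      (wordProd n ii k ⟨ii ⟨k, hk⟩, Nat.lt_of_succ_lt (hii ⟨k, hk⟩)⟩,
        wordProd n ii k ⟨ii ⟨k, hk⟩ + 1, hii ⟨k, hk⟩⟩) ∉ vInv (wordProd n ii k) ∧
      vInv (wordProd n ii (k + 1))
        = insert (wordProd n ii k ⟨ii ⟨k, hk⟩, Nat.lt_of_succ_lt (hii ⟨k, hk⟩)⟩,
            wordProd n ii k ⟨ii ⟨k, hk⟩ + 1, hii ⟨k, hk⟩⟩) (vInv (wordProd n ii k))) ∨
    (wordProd n ii k ⟨ii ⟨k, hk⟩ + 1, hii ⟨k, hk⟩⟩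
        < wordProd n ii k ⟨ii ⟨k, hk⟩, Nat.lt_of_succ_lt (hii ⟨k, hk⟩)⟩ ∧
      (wordProd n ii k ⟨ii ⟨k, hk⟩ + 1, hii ⟨k, hk⟩⟩,
        wordProd n ii k ⟨ii ⟨k, hk⟩, Nat.lt_of_succ_lt (hii ⟨k, hk⟩)⟩) ∈ vInv (wordProd n ii k) ∧
      vInv (wordProd n ii (k + 1))
        = (vInv (wordProd n ii k)).erase
            (wordProd n ii k ⟨ii ⟨k, hk⟩ + 1, hii ⟨k, hk⟩⟩,
              wordProd n ii k ⟨ii ⟨k, hk⟩, Nat.lt_of_succ_lt (hii ⟨k, hk⟩)⟩)) := by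
  have := vInv_mul_swap (hii ⟨k, hk⟩) (wordProd n ii k)
  rwa [← sNat_eq (hii ⟨k, hk⟩), ← wordProd_succ n ii hk] at this

lemma card_succ_cases (hii : ∀ k, ii k + 1 < n) {k : ℕ} (hk : k < l) :
    (vInv (wordProd n ii (k + 1))).card = (vInv (wordProd n ii k)).card + 1 ∨
    (vInv (wordProd n ii k)).card = (vInv (wordProd n ii (k + 1))).card + 1 := by
  rcases step_dich hii hk with ⟨-, hnm, heq⟩ | ⟨-, hm, heq⟩
  · left; rw [heq, Finset.card_insert_of_notMem hnm]
  · right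
    rw [heq, Finset.card_erase_of_mem hm]
    have : 1 ≤ (vInv (wordProd n ii k)).card := Finset.card_pos.2 ⟨_, hm⟩
    omega

lemma card_le_idx (hii : ∀ k, ii k + 1 < n) : ∀ k, k ≤ l → (vInv (wordProd n ii k)).card ≤ k := by
  intro k
  induction k with
  | zero => intro _; simp [wordProd_zero, vInv_one]
  | succ k ih =>
    intro hk
    rcases card_succ_cases hii (Nat.lt_of_succ_le hk) with h | h <;>
      have := ih (by omega) <;> omega

lemma card_drop (hii : ∀ k, ii k + 1 < n) :
    ∀ d m : ℕ, m + d ≤ l →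
      (vInv (wordProd n ii (m + d))).card ≤ (vInv (wordProd n ii m)).card + d := by
  intro d
  induction d with
  | zero => intro m _; simp
  | succ d ih =>
    intro m hm
    have h1 := ih m (by omega)
    have h2 := card_succ_cases hii (k := m + d) (by omega)
    have : m + (d + 1) = (m + d) + 1 := by omega
    rw [this]
    omega

lemma card_eq_idx (hii : ∀ k, ii k + 1 < n) (hred : invCount (wordProd n ii l) = l) :
    ∀ k, k ≤ l → (vInv (wordProd n ii k)).card = k := by
  intro k hk
  have hl : (vInv (wordProd n ii l)).card = l := by rw [vInv_card]; exact hred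
  have h1 := card_le_idx hii k hk
  have h2 := card_drop hii (l - k) k (by omega)
  rw [show k + (l - k) = l by omega] at h2
  omega

lemma step_insert (hii : ∀ k, ii k + 1 < n) (hred : invCount (wordProd n ii l) = l)
    {k : ℕ} (hk : k < l) :
    wordProd n ii k ⟨ii ⟨k, hk⟩, Nat.lt_of_succ_lt (hii ⟨k, hk⟩)⟩
        < wordProd n ii k ⟨ii ⟨k, hk⟩ + 1, hii ⟨k, hk⟩⟩ ∧
      vInv (wordProd n ii (k + 1))
        = insert (wordProd n ii k ⟨ii ⟨k, hk⟩, Nat.lt_of_succ_lt (hii ⟨k, hk⟩)⟩,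
            wordProd n ii k ⟨ii ⟨k, hk⟩ + 1, hii ⟨k, hk⟩⟩) (vInv (wordProd n ii k)) := by
  rcases step_dich hii hk with ⟨h1, -, heq⟩ | ⟨-, hm, heq⟩
  · exact ⟨h1, heq⟩
  · exfalso
    have e1 := card_eq_idx hii hred k (by omega)
    have e2 := card_eq_idx hii hred (k + 1) (by omega)
    rw [heq, Finset.card_erase_of_mem hm, e1] at e2
    omega

lemma vInv_subset (hii : ∀ k, ii k + 1 < n) (hred : invCount (wordProd n ii l) = l) :
    ∀ m, m ≤ l → ∀ k, k ≤ m → vInv (wordProd n ii k) ⊆ vInv (wordProd n ii m) := by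
  intro m
  induction m with
  | zero => intro _ k hk; rw [Nat.le_zero.1 hk]
  | succ m ih =>
    intro hm k hk
    rcases Nat.lt_or_ge k (m + 1) with h | h
    · refine (ih (by omega) k (by omega)).trans ?_
      rw [(step_insert hii hred (k := m) (by omega)).2]
      exact Finset.subset_insert _ _
    · rw [show k = m + 1 by omega]

lemma witness (hii : ∀ k, ii k + 1 < n) (hred : invCount (wordProd n ii l) = l) :
    ∀ k, k ≤ l → ∀ a b : Fin n, (a, b) ∈ vInv (wordProd n ii k) →
      ∃ k' : Fin l, b ∈ chamberSet n ii k' ∧ a ∉ chamberSet n ii k' := by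
  intro k
  induction k with
  | zero => intro _ a b hab; rw [wordProd_zero, vInv_one] at hab; exact absurd hab (by simp)
  | succ k ih =>
    intro hk a b hab
    have hkl : k < l := by omega
    obtain ⟨hlt, heq⟩ := step_insert hii hred hkl
    rw [heq, Finset.mem_insert] at hab
    rcases hab with hab | hab
    · -- the new pair
      refine ⟨⟨k, hkl⟩, ?_, ?_⟩
      · -- b ∈ chamberSet
        rw [chamberSet, Finset.mem_image]
        refine ⟨⟨ii ⟨k, hkl⟩, Nat.lt_of_succ_lt (hii ⟨k, hkl⟩)⟩, by simp [iseg], ?_⟩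
        rw [wordProd_succ n ii hkl, sNat_eq (hii ⟨k, hkl⟩), Equiv.Perm.mul_apply,
          Equiv.swap_apply_left]
        exact (Prod.mk.injEq _ _ _ _ ▸ hab).2.symm ▸ rfl
      · rw [chamberSet, Finset.mem_image]
        rintro ⟨t, ht, hta⟩
        rw [wordProd_succ n ii hkl, sNat_eq (hii ⟨k, hkl⟩), Equiv.Perm.mul_apply] at hta
        have ha : a = wordProd n ii k ⟨ii ⟨k, hkl⟩, Nat.lt_of_succ_lt (hii ⟨k, hkl⟩)⟩ :=
          (Prod.mk.injEq _ _ _ _ ▸ hab).1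
        have : Equiv.swap ⟨ii ⟨k, hkl⟩, Nat.lt_of_succ_lt (hii ⟨k, hkl⟩)⟩
            ⟨ii ⟨k, hkl⟩ + 1, hii ⟨k, hkl⟩⟩ t
            = ⟨ii ⟨k, hkl⟩, Nat.lt_of_succ_lt (hii ⟨k, hkl⟩)⟩ :=
          (wordProd n ii k).injective (hta.trans ha)
        have ht' : t = ⟨ii ⟨k, hkl⟩ + 1, hii ⟨k, hkl⟩⟩ := by
          have := congrArg (Equiv.swap ⟨ii ⟨k, hkl⟩, Nat.lt_of_succ_lt (hii ⟨k, hkl⟩)⟩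
            ⟨ii ⟨k, hkl⟩ + 1, hii ⟨k, hkl⟩⟩) this
          rwa [Equiv.swap_apply_self, Equiv.swap_apply_left] at this
        rw [ht'] at ht
        simp [iseg] at ht
    · exact ih (by omega) a b hab

lemma chamber_inv (hii : ∀ k, ii k + 1 < n) (k : Fin l) {a b : Fin n} (hab : a < b)
    (hb : b ∈ chamberSet n ii k) (ha : a ∉ chamberSet n ii k) :
    (a, b) ∈ vInv (wordProd n ii ((k : ℕ) + 1)) := by
  rw [chamberSet, Finset.mem_image] at hb ha
  obtain ⟨t, ht, htb⟩ := hb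
  have hsb : (wordProd n ii ((k : ℕ) + 1)).symm b = t := by
    rw [← htb, Equiv.symm_apply_apply]
  have hsa : ¬((wordProd n ii ((k : ℕ) + 1)).symm a : ℕ) < ii k + 1 := by
    intro hcon
    exact ha ⟨(wordProd n ii ((k : ℕ) + 1)).symm a, by simp [iseg, hcon]; omega,
      Equiv.apply_symm_apply _ _⟩
  have hgoal : (wordProd n ii ((k : ℕ) + 1)).symm b < (wordProd n ii ((k : ℕ) + 1)).symm a := by
    rw [hsb, Fin.lt_def]
    simp only [iseg, Finset.mem_filter, Finset.mem_univ, true_and] at ht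
    omega
  exact mem_vInv.2 ⟨hab, hgoal⟩

end StabAux

section LinAux

variable {n : ℕ}

/-- The submodule of vectors supported on `C`. -/
def zeroOff (C : Finset (Fin n)) : Submodule ℂ (Fin n → ℂ) where
  carrier := {v | ∀ i ∉ C, v i = 0}
  add_mem' := by intro a b ha hb i hi; simp [ha i hi, hb i hi]
  zero_mem' := by intro i hi; rfl
  smul_mem' := by intro c a ha i hi; simp [ha i hi]

lemma coordSub_eq_zeroOff (C : Finset (Fin n)) : coordSub C = zeroOff C := by
  apply le_antisymm
  · rw [coordSub, Submodule.span_le]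
    rintro v ⟨j, hj, rfl⟩
    intro i hi
    have : i ≠ j := by rintro rfl; exact hi hj
    exact Pi.single_eq_of_ne this 1
  · intro v hv
    have hrep : v = ∑ j ∈ C, v j • (Pi.single j (1 : ℂ) : Fin n → ℂ) := by
      funext i
      simp only [Finset.sum_apply, Pi.smul_apply, Pi.single_apply, smul_eq_mul, mul_ite,
        mul_one, mul_zero]
      rw [Finset.sum_ite_eq C i v]
      by_cases h : i ∈ C
      · simp [h]
      · simp [h, hv i h]
    rw [hrep]
    refine Submodule.sum_mem _ fun j hj => Submodule.smul_mem _ _ ?_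
    exact Submodule.subset_span ⟨j, hj, rfl⟩

lemma mem_coordSub {C : Finset (Fin n)} {v : Fin n → ℂ} :
    v ∈ coordSub C ↔ ∀ i ∉ C, v i = 0 := by
  rw [coordSub_eq_zeroOff]; rfl

lemma mapSub_eq_iff (g : GLn n) (C : Finset (Fin n)) :
    mapSub (g : Matrix (Fin n) (Fin n) ℂ) (coordSub C) = coordSub C ↔
      ∀ j ∈ C, ∀ i ∉ C, (g : Matrix (Fin n) (Fin n) ℂ) i j = 0 := by
  constructor
  · intro h j hj i hi
    have hmem : (Pi.single j (1 : ℂ) : Fin n → ℂ) ∈ coordSub C :=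
      Submodule.subset_span ⟨j, hj, rfl⟩
    have : Matrix.toLin' (g : Matrix (Fin n) (Fin n) ℂ) (Pi.single j 1) ∈ coordSub C := by
      rw [← h]; exact Submodule.mem_map_of_mem hmem
    rw [Matrix.toLin'_apply, Matrix.mulVec_single] at this
    have := mem_coordSub.1 this i hi
    simpa using this
  · intro hcol
    have hle : mapSub (g : Matrix (Fin n) (Fin n) ℂ) (coordSub C) ≤ coordSub C := by
      rw [mapSub, coordSub, Submodule.map_span, Submodule.span_le]
      rintro v ⟨w, ⟨j, hj, rfl⟩, rfl⟩
      have hv : Matrix.toLin' (g : Matrix (Fin n) (Fin n) ℂ) (Pi.single j 1) ∈ coordSub C := by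
        rw [Matrix.toLin'_apply, Matrix.mulVec_single, mem_coordSub]
        intro i hi
        simp [hcol j hj i hi]
      simpa [coordSub] using hv
    -- equality of dimensions
    have hGL : ((g : Matrix (Fin n) (Fin n) ℂ) * ((g⁻¹ : GLn n) : Matrix (Fin n) (Fin n) ℂ))
        = 1 := g.mul_inv
    have hGL' : (((g⁻¹ : GLn n) : Matrix (Fin n) (Fin n) ℂ) * (g : Matrix (Fin n) (Fin n) ℂ))
        = 1 := g.inv_mul
    let e : (Fin n → ℂ) ≃ₗ[ℂ] (Fin n → ℂ) :=
      LinearEquiv.ofLinear (Matrix.toLin' (g : Matrix (Fin n) (Fin n) ℂ))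
        (Matrix.toLin' ((g⁻¹ : GLn n) : Matrix (Fin n) (Fin n) ℂ))
        (by rw [← Matrix.toLin'_mul, hGL, Matrix.toLin'_one])
        (by rw [← Matrix.toLin'_mul, hGL', Matrix.toLin'_one])
    have hrank : Module.finrank ℂ (mapSub (g : Matrix (Fin n) (Fin n) ℂ) (coordSub C))
        = Module.finrank ℂ (coordSub C) := by
      have := LinearEquiv.finrank_map_eq e (coordSub C)
      exact this
    exact Submodule.eq_of_le_of_finrank_le hle hrank.ge

end LinAux
/-- For a reduced word `ii` of `w` (letters written 0-based), the stabilizer in `B` of the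
configuration of coordinate subspaces `(E_{C_1},…,E_{C_l})` given by the chamber sets
equals `B ∩ wBw⁻¹` (a matrix `g` lies in `wBw⁻¹` iff `g_{w(i),w(j)} = 0` for `i > j`). -/
theorem stabilizer_of_chamber_configuration
    (n l : ℕ) (ii : Fin l → ℕ) (hii : ∀ k, ii k + 1 < n)
    (hred : invCount (wordProd n ii l) = l) :
    {g : GLn n | upperTri g ∧
        ∀ k : Fin l,
          mapSub (g : Matrix (Fin n) (Fin n) ℂ) (coordSub (chamberSet n ii k))
            = coordSub (chamberSet n ii k)}
      = {g : GLn n | upperTri g ∧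
          ∀ i j : Fin n, j < i →
            (g : Matrix (Fin n) (Fin n) ℂ) (wordProd n ii l i) (wordProd n ii l j) = 0} := by
  ext g
  simp only [Set.mem_setOf_eq]
  constructor
  · rintro ⟨hg, hstab⟩
    refine ⟨hg, fun i j hij => ?_⟩
    rcases lt_trichotomy (wordProd n ii l i) (wordProd n ii l j) with h | h | h
    · have hmem : (wordProd n ii l i, wordProd n ii l j) ∈ vInv (wordProd n ii l) :=
        mem_vInv.2 ⟨h, by simpa [Equiv.symm_apply_apply] using hij⟩
      obtain ⟨k, hbk, hak⟩ := witness hii hred l le_rfl _ _ hmem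
      exact (mapSub_eq_iff g _).1 (hstab k) _ hbk _ hak
    · have hij' : i = j := (wordProd n ii l).injective h
      subst hij'
      exact absurd hij (lt_irrefl _)
    · exact hg _ _ h
  · rintro ⟨hg, hw⟩
    refine ⟨hg, fun k => (mapSub_eq_iff g _).2 ?_⟩
    intro b hb a ha
    rcases lt_trichotomy a b with h | h | h
    · have hmem : (a, b) ∈ vInv (wordProd n ii l) :=
        vInv_subset hii hred l le_rfl ((k : ℕ) + 1) (Nat.succ_le_of_lt k.isLt)
          (chamber_inv hii k h hb ha)
      have h2 := (mem_vInv.1 hmem).2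
      have h3 := hw _ _ h2
      simpa [Equiv.apply_symm_apply] using h3
    · subst h; exact absurd hb ha
    · exact hg a b h

end BottSamelson
end
end

section
/- For every w ∈ S_n, the columns of the Rothe diagram satisfy the northwest condition: if a ∈ C_{j_1}(w) and b ∈ C_{j_2}(w) with j_1 ≤ j_2, then min(a,b) ∈ C_{j_1}(w). Consequently, the inversion family I(w) is strongly separated. -/
open MvPolynomial

noncomputable section

namespace BottSamelson

theorem mem_rotheCol {n : ℕ} {w : Equiv.Perm (Fin n)} {j i : Fin n} :
    i ∈ rotheCol w j ↔ i < w.symm j ∧ j < w i := by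
  simp [rotheCol]

theorem min_mem_rotheCol {n : ℕ} (w : Equiv.Perm (Fin n)) {j₁ j₂ : Fin n} (hj : j₁ ≤ j₂)
    {a b : Fin n} (ha : a ∈ rotheCol w j₁) (hb : b ∈ rotheCol w j₂) :
    min a b ∈ rotheCol w j₁ := by
  rcases le_total a b with hab | hba
  · rwa [min_eq_left hab]
  · rw [min_eq_right hba, mem_rotheCol]
    rw [mem_rotheCol] at ha hb
    exact ⟨hba.trans_lt ha.1, hj.trans_lt hb.2⟩

theorem lt_of_mem_sdiff_of_min_mem {α : Type*} [LinearOrder α] {C C' : Finset α}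
    (hmin : ∀ a ∈ C, ∀ b ∈ C', min a b ∈ C) {a b : α} (ha : a ∈ C \ C') (hb : b ∈ C' \ C) :
    a < b := by
  rw [Finset.mem_sdiff] at ha hb
  by_contra! hba
  exact hb.2 (min_eq_right hba ▸ hmin a ha.1 b hb.1)

theorem stronglySep_of_min_mem {n : ℕ} {C C' : Finset (Fin n)}
    (hmin : ∀ a ∈ C, ∀ b ∈ C', min a b ∈ C) : stronglySep C C' :=
  Or.inl fun _ ha _ hb => lt_of_mem_sdiff_of_min_mem hmin ha hb

theorem stronglySep_comm {n : ℕ} {C C' : Finset (Fin n)} :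
    stronglySep C C' ↔ stronglySep C' C :=
  or_comm

/-- The columns of the Rothe diagram of any `w ∈ S_n` satisfy the northwest condition;
consequently the inversion family `I(w)` is strongly separated. -/
theorem rothe_columns_northwest_and_strongly_separated
    (n : ℕ) (w : Equiv.Perm (Fin n)) :
    (∀ j1 j2 : Fin n, j1 ≤ j2 →
      ∀ a ∈ rotheCol w j1, ∀ b ∈ rotheCol w j2, min a b ∈ rotheCol w j1)
    ∧ ∀ j1 j2 : Fin n, stronglySep (rotheCol w j1) (rotheCol w j2) := by
  refine ⟨fun j1 j2 hj a ha b hb => min_mem_rotheCol w hj ha hb, fun j1 j2 => ?_⟩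
  rcases le_total j1 j2 with hj | hj
  · exact stronglySep_of_min_mem fun a ha b hb => min_mem_rotheCol w hj ha hb
  · exact stronglySep_comm.mp
      (stronglySep_of_min_mem fun a ha b hb => min_mem_rotheCol w hj ha hb)

end BottSamelson
end
end

section
/- Injectivity of the opposite big cell (compactified Berenstein–Fomin–Zelevinsky matrix factorizations): Let i = (i_1,…,i_l) be a reduced word with letters in {1,…,n−1}. For t = (t_1,…,t_l) ∈ ℂ^l and 1 ≤ k ≤ l, let g_k(t) = (I + t_1 e_{i_1+1,i_1})(I + t_2 e_{i_2+1,i_2})⋯(I + t_k e_{i_k+1,i_k}) ∈ GL(n,ℂ), where e_{pq} denotes the matrix unit with 1 in position (p,q). Then the map ℂ^l → Gr(i_1,ℂ^n) × ⋯ × Gr(i_l,ℂ^n), t ↦ (g_1(t)·E_{[i_1]}, …, g_l(t)·E_{[i_l]}), is injective. -/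
open MvPolynomial

noncomputable section

namespace BottSamelson

section AuxInj

private lemma aux_step_isUnit {n : ℕ} (a : ℕ) (ha : a + 1 < n) (c : ℂ) :
    IsUnit ((1 : Matrix (Fin n) (Fin n) ℂ) +
      c • Matrix.single (⟨a + 1, ha⟩ : Fin n) ⟨a, Nat.lt_of_succ_lt ha⟩ (1 : ℂ)) := by
  set E := Matrix.single (⟨a + 1, ha⟩ : Fin n) (⟨a, Nat.lt_of_succ_lt ha⟩ : Fin n) (1 : ℂ)
    with hE
  have h0 : E * E = 0 := Matrix.single_mul_single_of_ne _ _ _ _ (by simp [Fin.ext_iff]) _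
  have key : ∀ x y : ℂ, (1 + x • E) * (1 + y • E) = 1 + (x + y) • E := by
    intro x y
    simp only [mul_add, add_mul, one_mul, mul_one, mul_smul_comm, smul_mul_assoc, smul_smul, h0,
      smul_zero, add_zero, add_smul]
    abel
  exact isUnit_iff_exists.mpr ⟨1 + (-c) • E, by rw [key]; simp, by rw [key]; simp⟩

private lemma aux_step_inj {n : ℕ} (a : ℕ) (ha : a + 1 < n) (c c' : ℂ)
    (h : mapSub ((1 : Matrix (Fin n) (Fin n) ℂ) +
          c • Matrix.single (⟨a + 1, ha⟩ : Fin n) ⟨a, Nat.lt_of_succ_lt ha⟩ (1 : ℂ))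
        (coordSub (iseg n (a + 1))) =
      mapSub ((1 : Matrix (Fin n) (Fin n) ℂ) +
          c' • Matrix.single (⟨a + 1, ha⟩ : Fin n) ⟨a, Nat.lt_of_succ_lt ha⟩ (1 : ℂ))
        (coordSub (iseg n (a + 1)))) : c = c' := by
  set Fb : Fin n := ⟨a + 1, ha⟩ with hFb
  set Fa : Fin n := ⟨a, Nat.lt_of_succ_lt ha⟩ with hFa
  have hab : Fa ≠ Fb := by simp [hFa, hFb, Fin.ext_iff]
  set A := (1 : Matrix (Fin n) (Fin n) ℂ) + c • Matrix.single Fb Fa (1 : ℂ) with hA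
  set A' := (1 : Matrix (Fin n) (Fin n) ℂ) + c' • Matrix.single Fb Fa (1 : ℂ) with hA'
  set φ : (Fin n → ℂ) →ₗ[ℂ] ℂ := LinearMap.proj Fb - c' • LinearMap.proj Fa with hφdef
  have hφ : ∀ v : Fin n → ℂ, φ v = v Fb - c' * v Fa := fun v => rfl
  have hker : mapSub A' (coordSub (iseg n (a + 1))) ≤ LinearMap.ker φ := by
    rw [mapSub, Submodule.map_le_iff_le_comap, coordSub, Submodule.span_le]
    rintro v ⟨j, hj, rfl⟩
    simp only [iseg, Finset.coe_filter, Set.mem_setOf_eq, Finset.mem_univ, true_and] at hj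
    have hFbj : Fb ≠ j := by
      intro hh; rw [← hh] at hj; simp [hFb] at hj
    simp only [SetLike.mem_coe, Submodule.mem_comap, LinearMap.mem_ker, Matrix.toLin'_apply,
      Matrix.mulVec_single, hφ]
    by_cases hja : j = Fa
    · subst hja
      simp [hA', Matrix.one_apply, hFbj, hab, Ne.symm hFbj]
    · simp [hA', Matrix.one_apply, hFbj, Ne.symm hFbj, fun hh : Fa = j => hja hh.symm,
        Matrix.single_apply_of_ne Fb Fa c' Fb j (fun hh => hja hh.2.symm),
        Matrix.single_apply_of_ne Fb Fa c' Fa j (fun hh => hab hh.1.symm)]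
      exact fun hh => absurd hh.symm hja
  have hmem : Matrix.toLin' A (Pi.single Fa 1) ∈ mapSub A (coordSub (iseg n (a + 1))) := by
    refine Submodule.mem_map_of_mem (Submodule.subset_span ⟨Fa, ?_, rfl⟩)
    simp [iseg, hFa]
  rw [h] at hmem
  have h2 := hker hmem
  rw [LinearMap.mem_ker, Matrix.toLin'_apply, Matrix.mulVec_single, hφ] at h2
  simp only [hA, Matrix.add_apply, Matrix.one_apply, Matrix.smul_apply,
    Matrix.single_apply_same, if_neg (Ne.symm hab), if_pos rfl,
    Matrix.single_apply_of_ne Fb Fa (1 : ℂ) Fa Fa (fun hh => hab hh.1.symm)] at h2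
  simp [Matrix.one_apply_ne (Ne.symm hab),
    Matrix.single_apply_of_ne Fb Fa c Fa Fa (fun hh => hab hh.1.symm)] at h2
  exact sub_eq_zero.mp h2

end AuxInj

/-- **Injectivity of the opposite big cell** (compactified Berenstein–Fomin–Zelevinsky
matrix factorizations).  For a reduced word (letters written 0-based), the map
`t ↦ (g_1(t)·E_{[i_1]}, …, g_l(t)·E_{[i_l]})`, where
`g_k(t) = (I + t_1 e_{i_1+1,i_1})⋯(I + t_k e_{i_k+1,i_k})`, is injective. -/
theorem bfz_factorization_injectivity
    (n l : ℕ) (aa : Fin l → ℕ) (haa : ∀ k, aa k + 1 < n)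
    (hred : invCount (wordProd n aa l) = l) :
    Function.Injective fun t : Fin l → ℂ => fun k : Fin l =>
      mapSub
        (((List.ofFn fun s : Fin l =>
            (1 : Matrix (Fin n) (Fin n) ℂ) +
              t s • Matrix.single
                (⟨aa s + 1, haa s⟩ : Fin n) (⟨aa s, Nat.lt_of_succ_lt (haa s)⟩ : Fin n)
                (1 : ℂ)).take ((k : ℕ) + 1)).prod)
        (coordSub (iseg n (aa k + 1))) := by
  intro t t' h
  simp only [_root_.funext_iff] at h
  suffices H : ∀ m : ℕ, ∀ hm : m < l, t ⟨m, hm⟩ = t' ⟨m, hm⟩ by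
    funext k
    simpa using H k k.isLt
  intro m
  induction m using Nat.strong_induction_on with
  | _ m ih =>
    intro hm
    set k : Fin l := ⟨m, hm⟩ with hk
    set Mt := fun s : Fin l => (1 : Matrix (Fin n) (Fin n) ℂ) +
      t s • Matrix.single (⟨aa s + 1, haa s⟩ : Fin n)
        (⟨aa s, Nat.lt_of_succ_lt (haa s)⟩ : Fin n) (1 : ℂ) with hMt
    set Mt' := fun s : Fin l => (1 : Matrix (Fin n) (Fin n) ℂ) +
      t' s • Matrix.single (⟨aa s + 1, haa s⟩ : Fin n)
        (⟨aa s, Nat.lt_of_succ_lt (haa s)⟩ : Fin n) (1 : ℂ) with hMt'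
    have hkeq := h k
    have hlen : m < (List.ofFn Mt).length := by simpa using hm
    have hlen' : m < (List.ofFn Mt').length := by simpa using hm
    have htake : (List.ofFn Mt).take m = (List.ofFn Mt').take m := by
      apply List.ext_getElem (by simp)
      intro i h1 h2
      have hi : i < m := by simpa using (List.length_take .. ▸ h1 : i < min m (List.ofFn Mt).length).trans_le (min_le_left _ _)
      have hil : i < l := by
        have := List.length_take .. ▸ h1
        simp at this
        omega
      rw [List.getElem_take, List.getElem_take, List.getElem_ofFn, List.getElem_ofFn]
      simp only [hMt, hMt']
      rw [ih i hi hil]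
    have hprod : ∀ (L : List (Matrix (Fin n) (Fin n) ℂ)) (hL : m < L.length),
        (L.take (m + 1)).prod = (L.take m).prod * L[m] := fun L hL => List.prod_take_succ L m hL
    rw [show ((k : ℕ) + 1) = m + 1 from rfl] at hkeq
    rw [hprod _ hlen, hprod _ hlen', htake, List.getElem_ofFn, List.getElem_ofFn] at hkeq
    set g := ((List.ofFn Mt').take m).prod with hg
    have hgu : IsUnit g := by
      apply List.prod_isUnit
      intro x hx
      have hx' : x ∈ List.ofFn Mt' := List.mem_of_mem_take hx
      rw [List.mem_ofFn] at hx'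
      obtain ⟨s, rfl⟩ := hx'
      exact aux_step_isUnit (aa s) (haa s) (t' s)
    obtain ⟨u, hu⟩ := hgu
    have hginj : Function.Injective (Matrix.toLin' g) := by
      intro x y hxy
      have h1 : (↑u⁻¹ : Matrix (Fin n) (Fin n) ℂ) * g = 1 := by rw [← hu]; exact u.inv_mul
      have h3 := congrArg (fun v => (↑u⁻¹ : Matrix (Fin n) (Fin n) ℂ).mulVec v) hxy
      simp only [Matrix.toLin'_apply, Matrix.mulVec_mulVec] at h3
      rwa [h1, Matrix.one_mulVec, Matrix.one_mulVec] at h3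
    simp only [mapSub, Matrix.toLin'_mul, Submodule.map_comp] at hkeq
    have hcancel := Submodule.map_injective_of_injective hginj hkeq
    have hfin : mapSub (Mt k) (coordSub (iseg n (aa k + 1))) =
        mapSub (Mt' k) (coordSub (iseg n (aa k + 1))) := by
      simpa [mapSub] using hcancel
    exact aux_step_inj (aa k) (haa k) (t k) (t' k) hfin


end BottSamelson
end
end

section
/- (Reiner–Shimozono form of strong separation) Let D = (C_1, C_2, …, C_m) be a family of distinct nonempty subsets of [n] listed in lexicographic order (C <lex C′ iff the smallest element of the symmetric difference C △ C′ belongs to C). Then D is strongly separated if and only if D is %-avoiding: whenever a ∈ C_{k_1} and b ∈ C_{k_2} with a > b and k_1 < k_2, either a ∈ C_{k_2} or b ∈ C_{k_1}. -/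
open MvPolynomial

noncomputable section

namespace BottSamelson

/- For `C <lex C'` the least element of `C ∆ C'` lies in `C \ C'`, so strong separation can only
hold with `C \ C'` below `C' \ C`; and for a single pair that orientation is exactly the
`%`-avoidance condition. -/

theorem forall_sdiff_lt_sdiff_iff {α : Type*} [LinearOrder α] [DecidableEq α] {s t : Finset α} :
    (∀ a ∈ s \ t, ∀ b ∈ t \ s, a < b) ↔
      ∀ a b : α, a ∈ s → b ∈ t → b < a → a ∈ t ∨ b ∈ s := by
  simp only [Finset.mem_sdiff, and_imp]
  constructor
  · intro h a b ha hb hba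
    by_contra! hout
    exact (h a ha hout.1 b hb hout.2).not_gt hba
  · intro h a ha hat b hb hbs
    by_contra! hba
    have hne : b ≠ a := fun hab => hat (hab ▸ hb)
    exact (h a b ha hb (hba.lt_of_ne hne)).elim hat hbs

theorem stronglySep_self {n : ℕ} (C : Finset (Fin n)) : stronglySep C C :=
  Or.inl (by simp)

theorem lexLT.forall_sdiff_lt_sdiff {n : ℕ} {C C' : Finset (Fin n)} (hlex : lexLT C C')
    (hsep : stronglySep C C') : ∀ a ∈ C \ C', ∀ b ∈ C' \ C, a < b := by
  obtain ⟨a₀, ⟨hsymm, hleast⟩, ha₀⟩ := hlex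
  have ha₀' : a₀ ∈ C \ C' := by
    simp only [Finset.coe_union, Set.mem_union, Finset.mem_coe, Finset.mem_sdiff] at hsymm ⊢
    exact hsymm.resolve_right fun h => h.2 ha₀
  rcases hsep with hlt | hgt
  · exact hlt
  · intro a _ b hb
    exact absurd (hgt b hb a₀ ha₀') (not_lt.2 (hleast (by simp [Finset.mem_sdiff.1 hb])))

theorem strongly_separated_iff_percent_avoiding_general
    (n m : ℕ) (C : Fin m → Finset (Fin n))
    (hlex : ∀ k1 k2 : Fin m, k1 < k2 → lexLT (C k1) (C k2)) :
    (∀ k1 k2 : Fin m, stronglySep (C k1) (C k2)) ↔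
      ∀ k1 k2 : Fin m, k1 < k2 → ∀ a b : Fin n,
        a ∈ C k1 → b ∈ C k2 → b < a → a ∈ C k2 ∨ b ∈ C k1 := by
  constructor
  · intro hsep k1 k2 hk
    exact forall_sdiff_lt_sdiff_iff.1 ((hlex k1 k2 hk).forall_sdiff_lt_sdiff (hsep k1 k2))
  · intro havoid k1 k2
    rcases lt_trichotomy k1 k2 with hk | rfl | hk
    · exact Or.inl (forall_sdiff_lt_sdiff_iff.2 (havoid k1 k2 hk))
    · exact stronglySep_self _
    · exact Or.inr (forall_sdiff_lt_sdiff_iff.2 (havoid k2 k1 hk))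

/-- **Reiner–Shimozono form of strong separation.**  A family of distinct nonempty subsets
of `[n]` listed in lexicographic order is strongly separated iff it is `%`-avoiding:
whenever `a ∈ C_{k_1}`, `b ∈ C_{k_2}` with `a > b` and `k_1 < k_2`, either `a ∈ C_{k_2}`
or `b ∈ C_{k_1}`. -/
theorem strongly_separated_iff_percent_avoiding
    (n m : ℕ) (C : Fin m → Finset (Fin n))
    (hne : ∀ k, (C k).Nonempty)
    (hlex : ∀ k1 k2 : Fin m, k1 < k2 → lexLT (C k1) (C k2)) :
    (∀ k1 k2 : Fin m, stronglySep (C k1) (C k2)) ↔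
      ∀ k1 k2 : Fin m, k1 < k2 → ∀ a b : Fin n,
        a ∈ C k1 → b ∈ C k2 → b < a → a ∈ C k2 ∨ b ∈ C k1 :=
  strongly_separated_iff_percent_avoiding_general n m C hlex

end BottSamelson
end
end
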